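/- arXiv:2310.05390 — 8 statements merged into one kernel-verified Lean document; each statement's English description precedes it below -/
import Mathlib

section
/- Let ρ = d^{2α−4} 2^{−d} e^{−2^d d^{4−2α}} for an integer d ≥ 1, and suppose ω < ρ. Define v_0 = 0 and, for n ≥ 1, v_n = ∑_{k=1}^n γ_k^{1+θ} e^{−ρ(t_n − t_k)}. Then limsup_{n→∞} v_n / γ_n^θ ≤ (2/(ρ−ω)) · e^{((ρ−ω)/2)·γ_1}. -/
open Filter

set_option maxHeartbeats 1000000 in
/-- with `ρ = d^{2α-4} 2^{-d} e^{-2^d d^{4-2α}}` and `ω < ρ`, the sequence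
`v_n = ∑_{k=1}^n γ_k^{1+θ} e^{-ρ(t_n - t_k)}` satisfies
`limsup v_n / γ_n^θ ≤ (2/(ρ-ω)) e^{((ρ-ω)/2) γ_1}`. -/
theorem stmt_0 (α θ : ℝ) (hα1 : 1 < α) (hα2 : α < 2) (hθ0 : 0 < θ) (hθ1 : θ ≤ 1)
    (γ : ℕ → ℝ) (hγpos : ∀ n, 0 < γ n) (hγdec : ∀ n, γ (n + 1) ≤ γ n)
    (hγlim : Tendsto γ atTop (nhds 0))
    (hγsum : Tendsto (fun n => ∑ i ∈ Finset.range n, γ (i + 1)) atTop atTop)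
    (t : ℕ → ℝ) (ht : ∀ n, t n = ∑ i ∈ Finset.range n, γ (i + 1))
    (ω : ℝ)
    (hω : (ω : EReal) =
      limsup (fun k => (((γ k ^ θ - γ (k + 1) ^ θ) / γ (k + 1) ^ (1 + θ) : ℝ) : EReal)) atTop)
    (d : ℕ) (hd : 1 ≤ d) (ρ : ℝ)
    (hρ : ρ = (d : ℝ) ^ (2 * α - 4) * (2 : ℝ) ^ (-(d : ℝ)) *
      Real.exp (-(2 : ℝ) ^ (d : ℝ) * (d : ℝ) ^ (4 - 2 * α)))
    (hωρ : ω < ρ)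
    (v : ℕ → ℝ) (hv0 : v 0 = 0)
    (hv : ∀ n, v n = ∑ k ∈ Finset.Icc 1 n, γ k ^ (1 + θ) * Real.exp (-ρ * (t n - t k))) :
    limsup (fun n => ((v n / γ n ^ θ : ℝ) : EReal)) atTop
      ≤ ((2 / (ρ - ω) * Real.exp ((ρ - ω) / 2 * γ 1) : ℝ) : EReal) := by
  -- basic positivity
  have hdpos : (0:ℝ) < (d:ℝ) := by exact_mod_cast Nat.lt_of_lt_of_le Nat.zero_lt_one hd
  have hρ0 : 0 < ρ := by
    rw [hρ]; positivity
  have hγθpos : ∀ n, (0:ℝ) < γ n ^ θ := fun n => Real.rpow_pos_of_pos (hγpos n) θ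
  have hvnonneg : ∀ n, 0 ≤ v n := by
    intro n; rw [hv n]
    apply Finset.sum_nonneg
    intro k _
    have := hγpos k
    positivity
  obtain ⟨u, hu⟩ : ∃ u : ℕ → ℝ, ∀ n, u n = v n / γ n ^ θ := ⟨_, fun _ => rfl⟩
  have hunonneg : ∀ n, 0 ≤ u n := fun n => (hu n) ▸ div_nonneg (hvnonneg n) (hγθpos n).le
  -- ω ≥ 0
  have hω0 : 0 ≤ ω := by
    have hterm : ∀ k, (0:ℝ) ≤ (γ k ^ θ - γ (k + 1) ^ θ) / γ (k + 1) ^ (1 + θ) := by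
      intro k
      apply div_nonneg _ (Real.rpow_pos_of_pos (hγpos (k+1)) (1+θ)).le
      have := Real.rpow_le_rpow (hγpos (k+1)).le (hγdec k) hθ0.le
      linarith
    have : ((0:ℝ) : EReal) ≤ (ω : EReal) := by
      rw [hω]
      refine Filter.le_limsup_of_frequently_le ?_ (by isBoundedDefault)
      apply Filter.Eventually.frequently
      filter_upwards with k
      exact_mod_cast hterm k
    exact_mod_cast this
  obtain ⟨δ, hδdef⟩ : ∃ x : ℝ, x = (ρ - ω) / 2 := ⟨_, rfl⟩
  have hδ0 : 0 < δ := by rw [hδdef]; linarith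
  obtain ⟨a, hadef⟩ : ∃ x : ℝ, x = ω + δ / 2 := ⟨_, rfl⟩
  have ha0 : 0 < a := by rw [hadef]; linarith
  have hρa : ρ - a = 3 * δ / 2 := by rw [hadef, hδdef]; ring
  -- eventually: ratio bound on γ
  have hev1 : ∀ᶠ k in atTop, γ k ^ θ ≤ γ (k+1) ^ θ * (1 + a * γ (k+1)) := by
    have hlt : limsup (fun k => (((γ k ^ θ - γ (k + 1) ^ θ) / γ (k + 1) ^ (1 + θ) : ℝ) : EReal))
        atTop < ((a : ℝ) : EReal) := by
      rw [← hω]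
      exact_mod_cast (by rw [hadef]; linarith : ω < a)
    have hev := Filter.eventually_lt_of_limsup_lt hlt
    filter_upwards [hev] with k hk
    have hk' : (γ k ^ θ - γ (k + 1) ^ θ) / γ (k + 1) ^ (1 + θ) < a := by exact_mod_cast hk
    have hpk : (0:ℝ) < γ (k+1) ^ (1+θ) := Real.rpow_pos_of_pos (hγpos (k+1)) _
    have h1 : γ k ^ θ - γ (k + 1) ^ θ ≤ a * γ (k + 1) ^ (1 + θ) := by
      have := (div_lt_iff₀ hpk).mp hk'
      linarith
    have h2 : γ (k+1) ^ (1+θ) = γ (k+1) * γ (k+1) ^ θ := by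
      rw [Real.rpow_add (hγpos (k+1)), Real.rpow_one]
    rw [h2] at h1
    nlinarith
  -- eventually: γ (n+1) small
  have hγlim' : Tendsto (fun n => γ (n+1)) atTop (nhds 0) :=
    hγlim.comp (tendsto_add_atTop_nat 1)
  have hev2 : ∀ᶠ n in atTop, γ (n+1) < 1 / (2 * ρ) :=
    hγlim'.eventually_lt_const (by positivity)
  -- the key scalar inequality
  have hexp : ∀ x : ℝ, 0 < x → x < 1 / (2 * ρ) →
      Real.exp (-ρ * x) * (1 + a * x) ≤ 1 - δ * x := by
    intro x hx0 hx1
    have h1 : 1 + ρ * x ≤ Real.exp (ρ * x) := by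
      have := Real.add_one_le_exp (ρ * x); linarith
    have hpos : (0:ℝ) < 1 + ρ * x := by positivity
    have h2 : Real.exp (-ρ * x) ≤ 1 / (1 + ρ * x) := by
      rw [neg_mul, Real.exp_neg]
      exact (inv_anti₀ hpos h1).trans_eq (one_div _).symm
    have hxρ : ρ * x < 1 / 2 := by
      have := (lt_div_iff₀ (by positivity : (0:ℝ) < 2 * ρ)).mp hx1
      nlinarith
    have h3 : (1 + a * x) / (1 + ρ * x) ≤ 1 - δ * x := by
      rw [div_le_iff₀ hpos]
      have h5 : ρ - δ - a = δ / 2 := by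
        have := hρa
        linarith
      have h4 : (ρ - δ - a) * x = δ / 2 * x := by rw [h5]
      nlinarith [mul_le_mul_of_nonneg_left hxρ.le (by positivity : (0:ℝ) ≤ δ * x), h4]
    calc Real.exp (-ρ * x) * (1 + a * x) ≤ (1 / (1 + ρ * x)) * (1 + a * x) := by
            apply mul_le_mul_of_nonneg_right h2
            nlinarith
      _ = (1 + a * x) / (1 + ρ * x) := by ring
      _ ≤ 1 - δ * x := h3
  -- recurrence for v
  have htstep : ∀ n, t (n+1) = t n + γ (n+1) := by
    intro n; rw [ht, ht, Finset.sum_range_succ]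
  have hrec : ∀ n, v (n+1) = Real.exp (-ρ * γ (n+1)) * v n + γ (n+1) ^ (1+θ) := by
    intro n
    rw [hv (n+1), Finset.sum_Icc_succ_top (Nat.le_add_left 1 n), hv n, Finset.mul_sum]
    congr 1
    · apply Finset.sum_congr rfl
      intro k _
      rw [htstep n]
      rw [show -ρ * (t n + γ (n+1) - t k) = -ρ * γ (n+1) + -ρ * (t n - t k) by ring,
        Real.exp_add]
      ring
    · simp [Real.exp_zero]
  -- combine eventualities
  obtain ⟨N, hN⟩ := (eventually_atTop.mp (hev1.and hev2))
  -- one-step inequality for u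
  have h1δ : ∀ n, N ≤ n → 0 < 1 - δ * γ (n+1) := by
    intro n hn
    have h := hexp (γ (n+1)) (hγpos (n+1)) (hN n hn).2
    have he : 0 < Real.exp (-ρ * γ (n+1)) * (1 + a * γ (n+1)) := by
      apply mul_pos (Real.exp_pos _)
      nlinarith [hγpos (n+1)]
    linarith
  have hstep : ∀ n, N ≤ n → u (n+1) ≤ (1 - δ * γ (n+1)) * u n + γ (n+1) := by
    intro n hn
    have hg' := hγpos (n+1)
    have hgθ := hγθpos (n+1)
    have hgθn := hγθpos n
    have hvu : v n = u n * γ n ^ θ := by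
      rw [hu n]; field_simp
    have hr : γ n ^ θ ≤ γ (n+1) ^ θ * (1 + a * γ (n+1)) := (hN n hn).1
    have hE := hexp (γ (n+1)) hg' (hN n hn).2
    have hE0 : (0:ℝ) < Real.exp (-ρ * γ (n+1)) := Real.exp_pos _
    have hlast : γ (n+1) ^ (1+θ) = γ (n+1) * γ (n+1) ^ θ := by
      rw [Real.rpow_add hg', Real.rpow_one]
    have hun : u (n+1) * γ (n+1) ^ θ = Real.exp (-ρ * γ (n+1)) * (u n * γ n ^ θ)
        + γ (n+1) * γ (n+1) ^ θ := by
      have h1 : u (n+1) * γ (n+1) ^ θ = v (n+1) := by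
        rw [hu (n+1)]; field_simp
      rw [h1, hrec n, hvu, hlast]
    have key : Real.exp (-ρ * γ (n+1)) * (u n * γ n ^ θ)
        ≤ (1 - δ * γ (n+1)) * u n * γ (n+1) ^ θ := by
      calc Real.exp (-ρ * γ (n+1)) * (u n * γ n ^ θ)
          ≤ Real.exp (-ρ * γ (n+1)) * (u n * (γ (n+1) ^ θ * (1 + a * γ (n+1)))) := by
            apply mul_le_mul_of_nonneg_left _ hE0.le
            exact mul_le_mul_of_nonneg_left hr (hunonneg n)
        _ = (Real.exp (-ρ * γ (n+1)) * (1 + a * γ (n+1))) * u n * γ (n+1) ^ θ := by ring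
        _ ≤ (1 - δ * γ (n+1)) * u n * γ (n+1) ^ θ := by
            apply mul_le_mul_of_nonneg_right _ hgθ.le
            exact mul_le_mul_of_nonneg_right hE (hunonneg n)
    have goal' : u (n+1) * γ (n+1) ^ θ ≤ ((1 - δ * γ (n+1)) * u n + γ (n+1)) * γ (n+1) ^ θ := by
      rw [hun]; nlinarith [key, hγpos (n+1), hgθ]
    exact le_of_mul_le_mul_right goal' hgθ
  -- the target constant
  obtain ⟨C, hC⟩ : ∃ x : ℝ, x = 2 / (ρ - ω) * Real.exp ((ρ - ω) / 2 * γ 1) := ⟨_, rfl⟩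
  have hCeq : C = (1/δ) * Real.exp (δ * γ 1) := by
    rw [hC, hδdef, one_div_div]
  obtain ⟨η, hη⟩ : ∃ x : ℝ, x = C - 1/δ := ⟨_, rfl⟩
  have hη0 : 0 < η := by
    rw [hη, hCeq]
    have h1 : (1:ℝ) < Real.exp (δ * γ 1) := by
      have := Real.add_one_le_exp (δ * γ 1)
      nlinarith [mul_pos hδ0 (hγpos 1)]
    have h2 : (0:ℝ) < 1/δ := by positivity
    nlinarith
  have hCη : 1/δ + η = C := by rw [hη]; ring
  -- Claim A: there is m ≥ N with u m ≤ 1/δ + η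
  have claimA : ∃ m, N ≤ m ∧ u m ≤ 1/δ + η := by
    by_contra hcon
    push_neg at hcon
    have hbig : ∀ m, N ≤ m → 1/δ + η < u m := fun m hm => hcon m hm
    have hdecr : ∀ n, N ≤ n → u n ≤ u N - δ * η * (t n - t N) := by
      intro n hn
      induction n with
      | zero =>
        have : N = 0 := Nat.le_zero.mp hn
        subst this; simp
      | succ k ih =>
        rcases Nat.lt_or_ge N (k+1) with hlt | hge
        · have hk : N ≤ k := Nat.lt_succ_iff.mp hlt
          have ihk := ih hk
          have hs := hstep k hk
          have hb := hbig k hk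
          have h1 := h1δ k hk
          have hg := hγpos (k+1)
          have hb' : 1 + δ * η < δ * u k := by
            have h2 := mul_lt_mul_of_pos_left hb hδ0
            rwa [mul_add, mul_one_div_cancel hδ0.ne'] at h2
          have : u (k+1) ≤ u k - δ * η * γ (k+1) := by
            nlinarith [mul_le_mul_of_nonneg_left hb'.le hg.le, hs]
          rw [htstep k]; linarith
        · have : N = k + 1 := le_antisymm hn hge
          subst this; simp
    -- t n → ∞, contradiction
    have httop : Tendsto t atTop atTop := by
      have : t = fun n => ∑ i ∈ Finset.range n, γ (i + 1) := funext ht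
      rw [this]; exact hγsum
    obtain ⟨n, hn1, hn2⟩ := ((httop.eventually_ge_atTop (t N + (u N + 1) / (δ * η))).and
      (eventually_ge_atTop N)).exists
    have hdn := hdecr n hn2
    have hδη : 0 < δ * η := mul_pos hδ0 hη0
    have h1 : (u N + 1) / (δ * η) ≤ t n - t N := by linarith
    have h2 : u N + 1 ≤ δ * η * (t n - t N) := by
      have := (div_le_iff₀ hδη).mp h1
      linarith
    have := hunonneg n
    linarith
  obtain ⟨m, hmN, hm⟩ := claimA
  -- Claim B: u n ≤ 1/δ + η for all n ≥ m
  have claimB : ∀ n, m ≤ n → u n ≤ 1/δ + η := by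
    intro n hn
    induction n with
    | zero =>
      have : m = 0 := Nat.le_zero.mp hn
      subst this; exact hm
    | succ k ih =>
      rcases Nat.lt_or_ge m (k+1) with hlt | hge
      · have hk : m ≤ k := Nat.lt_succ_iff.mp hlt
        have ihk := ih hk
        have hs := hstep k (hmN.trans hk)
        have h1 := h1δ k (hmN.trans hk)
        have hg := hγpos (k+1)
        have hδinv : δ * (1/δ) = 1 := by field_simp
        nlinarith [mul_le_mul_of_nonneg_left ihk h1.le, hδinv,
          mul_pos (mul_pos hδ0 hg) hη0, hs]
      · have : m = k + 1 := le_antisymm hn hge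
        subst this; exact hm
  -- conclude
  have hfinal : ∀ᶠ n in atTop, ((v n / γ n ^ θ : ℝ) : EReal) ≤ ((C : ℝ) : EReal) := by
    rw [eventually_atTop]
    refine ⟨m, fun n hn => EReal.coe_le_coe_iff.mpr ?_⟩
    rw [← hu n]
    exact (claimB n hn).trans_eq hCη
  have hconc := Filter.limsup_le_of_le (by isBoundedDefault) hfinal
  rwa [hC] at hconc
end

section
/- Let ρ = d^{2α−4} 2^{−d} e^{−2^d d^{4−2α}} for an integer d ≥ 1, and suppose ω < ρ. Then lim_{n→∞} e^{−ρ t_n} / γ_n^θ = 0. -/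
open Filter

/-- with `ρ = d^{2α-4} 2^{-d} e^{-2^d d^{4-2α}}` and `ω < ρ`,
one has `lim_{n→∞} e^{-ρ t_n} / γ_n^θ = 0`. -/
theorem stmt_1 (α θ : ℝ) (hα1 : 1 < α) (hα2 : α < 2) (hθ0 : 0 < θ) (hθ1 : θ ≤ 1)
    (γ : ℕ → ℝ) (hγpos : ∀ n, 0 < γ n) (hγdec : ∀ n, γ (n + 1) ≤ γ n)
    (hγlim : Tendsto γ atTop (nhds 0))
    (hγsum : Tendsto (fun n => ∑ i ∈ Finset.range n, γ (i + 1)) atTop atTop)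
    (t : ℕ → ℝ) (ht : ∀ n, t n = ∑ i ∈ Finset.range n, γ (i + 1))
    (ω : ℝ)
    (hω : (ω : EReal) =
      limsup (fun k => (((γ k ^ θ - γ (k + 1) ^ θ) / γ (k + 1) ^ (1 + θ) : ℝ) : EReal)) atTop)
    (d : ℕ) (hd : 1 ≤ d) (ρ : ℝ)
    (hρ : ρ = (d : ℝ) ^ (2 * α - 4) * (2 : ℝ) ^ (-(d : ℝ)) *
      Real.exp (-(2 : ℝ) ^ (d : ℝ) * (d : ℝ) ^ (4 - 2 * α)))
    (hωρ : ω < ρ) :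
    Tendsto (fun n => Real.exp (-ρ * t n) / γ n ^ θ) atTop (nhds 0) := by
  have hd0 : (0 : ℝ) < (d : ℝ) := by exact_mod_cast hd
  have hρ0 : 0 < ρ := by rw [hρ]; positivity
  set c : ℝ := (max ω 0 + ρ) / 2 with hc
  have hmax : max ω 0 < ρ := max_lt hωρ hρ0
  have hc0 : 0 ≤ c := by
    have := le_max_right ω 0; rw [hc]; linarith
  have hωc : ω < c := by
    have := le_max_left ω 0; rw [hc]; linarith
  have hcρ : c < ρ := by rw [hc]; linarith
  set δ : ℝ := ρ - c with hδ
  have hδ0 : 0 < δ := by rw [hδ]; linarith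
  -- eventual bound from the limsup
  have hls : limsup (fun k =>
      (((γ k ^ θ - γ (k + 1) ^ θ) / γ (k + 1) ^ (1 + θ) : ℝ) : EReal)) atTop < (c : EReal) := by
    rw [← hω]; exact_mod_cast hωc
  have hev : ∀ᶠ k in atTop, (γ k ^ θ - γ (k + 1) ^ θ) / γ (k + 1) ^ (1 + θ) < c := by
    filter_upwards [eventually_lt_of_limsup_lt hls] with k hk
    exact_mod_cast hk
  obtain ⟨N, hN⟩ := eventually_atTop.1 hev
  -- one-step inequality
  have step : ∀ k, N ≤ k →
      Real.exp (-ρ * t (k + 1)) / γ (k + 1) ^ θ ≤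
        (Real.exp (-ρ * t k) / γ k ^ θ) * Real.exp (-δ * γ (k + 1)) := by
    intro k hk
    have hg := hγpos (k + 1)
    have hG := hγpos k
    have hgθ : (0 : ℝ) < γ (k + 1) ^ θ := Real.rpow_pos_of_pos hg θ
    have hGθ : (0 : ℝ) < γ k ^ θ := Real.rpow_pos_of_pos hG θ
    have h1θ : γ (k + 1) ^ (1 + θ) = γ (k + 1) * γ (k + 1) ^ θ := by
      rw [Real.rpow_add hg, Real.rpow_one]
    have hbound : γ k ^ θ ≤ (1 + c * γ (k + 1)) * γ (k + 1) ^ θ := by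
      have h := hN k hk
      have h1θpos : (0 : ℝ) < γ (k + 1) ^ (1 + θ) := Real.rpow_pos_of_pos hg _
      rw [div_lt_iff₀ h1θpos] at h
      rw [h1θ] at h
      nlinarith
    have hexp : 1 + c * γ (k + 1) ≤ Real.exp (c * γ (k + 1)) := by
      have := Real.add_one_le_exp (c * γ (k + 1)); linarith
    have ht1 : t (k + 1) = t k + γ (k + 1) := by
      rw [ht, ht, Finset.sum_range_succ]
    have hkey : γ k ^ θ ≤ Real.exp (c * γ (k + 1)) * γ (k + 1) ^ θ := by
      calc γ k ^ θ ≤ (1 + c * γ (k + 1)) * γ (k + 1) ^ θ := hbound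
        _ ≤ Real.exp (c * γ (k + 1)) * γ (k + 1) ^ θ := by
            exact mul_le_mul_of_nonneg_right hexp hgθ.le
    rw [div_le_iff₀ hgθ, div_mul_eq_mul_div, div_mul_eq_mul_div, le_div_iff₀ hGθ, ht1]
    have : Real.exp (-ρ * (t k + γ (k + 1))) * γ k ^ θ ≤
        Real.exp (-ρ * (t k + γ (k + 1))) * (Real.exp (c * γ (k + 1)) * γ (k + 1) ^ θ) :=
      mul_le_mul_of_nonneg_left hkey (Real.exp_pos _).le
    calc Real.exp (-ρ * (t k + γ (k + 1))) * γ k ^ θ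
        ≤ Real.exp (-ρ * (t k + γ (k + 1))) * (Real.exp (c * γ (k + 1)) * γ (k + 1) ^ θ) := this
      _ = Real.exp (-ρ * t k) * Real.exp (-δ * γ (k + 1)) * γ (k + 1) ^ θ := by
          rw [← Real.exp_add, ← mul_assoc, ← Real.exp_add]
          congr 2
          rw [hδ]; ring
  -- induction: decay bound
  have key : ∀ n, N ≤ n →
      Real.exp (-ρ * t n) / γ n ^ θ ≤
        (Real.exp (-ρ * t N) / γ N ^ θ) * Real.exp (-δ * (t n - t N)) := by
    intro n hn
    induction n, hn using Nat.le_induction with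
    | base => simp
    | succ n hn ih =>
        have ht1 : t (n + 1) = t n + γ (n + 1) := by
          rw [ht, ht, Finset.sum_range_succ]
        calc Real.exp (-ρ * t (n + 1)) / γ (n + 1) ^ θ
            ≤ (Real.exp (-ρ * t n) / γ n ^ θ) * Real.exp (-δ * γ (n + 1)) := step n hn
          _ ≤ ((Real.exp (-ρ * t N) / γ N ^ θ) * Real.exp (-δ * (t n - t N))) *
                Real.exp (-δ * γ (n + 1)) :=
              mul_le_mul_of_nonneg_right ih (Real.exp_pos _).le
          _ = (Real.exp (-ρ * t N) / γ N ^ θ) * Real.exp (-δ * (t (n + 1) - t N)) := by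
              rw [mul_assoc, ← Real.exp_add, ht1]; ring_nf
  -- t n → ∞
  have htt : Tendsto t atTop atTop := by
    have : t = fun n => ∑ i ∈ Finset.range n, γ (i + 1) := funext ht
    rw [this]; exact hγsum
  have hgtend : Tendsto (fun n =>
      (Real.exp (-ρ * t N) / γ N ^ θ) * Real.exp (-δ * (t n - t N))) atTop (nhds 0) := by
    have h0 : Tendsto (fun n => t n - t N) atTop atTop :=
      tendsto_atTop_add_const_right atTop (-t N) htt
    have h2 : Tendsto (fun n => δ * (t n - t N)) atTop atTop := h0.const_mul_atTop hδ0
    have h2' : Tendsto (fun n => -(δ * (t n - t N))) atTop atBot :=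
      tendsto_neg_atTop_atBot.comp h2
    have h3 : Tendsto (fun n => Real.exp (-δ * (t n - t N))) atTop (nhds 0) := by
      have h4 := Real.tendsto_exp_atBot.comp h2'
      simp only [neg_mul]
      exact h4
    simpa using h3.const_mul (Real.exp (-ρ * t N) / γ N ^ θ)
  apply squeeze_zero' ?_ ?_ hgtend
  · filter_upwards with n
    have := Real.exp_pos (-ρ * t n)
    have := Real.rpow_pos_of_pos (hγpos n) θ
    positivity
  · filter_upwards [eventually_ge_atTop N] with n hn
    exact key n hn
end

section
/- Let ρ = d^{2α−4} 2^{−d} e^{−2^d d^{4−2α}} for an integer d ≥ 1, suppose ω < ρ, and assume in addition θ ≤ 1/α. Then there exists a constant C > 0, independent of n, such that for every n with t_n > 1, setting n* = max{ i : t_n − t_i > 1 }, one has ∑_{i=n*+1}^{n−1} (t_n − t_i)^{−1/α} γ_i^{1+θ} ≤ C e^{ρ(1+γ_1)} γ_n^θ. -/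
open Filter

lemma rpow_concave_aux {β a b : ℝ} (hβ0 : 0 < β) (hβ1 : β ≤ 1)
    (hb : 0 ≤ b) (hba : b ≤ a) (ha : 0 < a) :
    β * (a ^ (β - 1) * (a - b)) ≤ a ^ β - b ^ β := by
  have hx0 : 0 ≤ b / a := div_nonneg hb ha.le
  have key : (b / a) ^ β ≤ β * (b / a) + (1 - β) := by
    have h := Real.geom_mean_le_arith_mean2_weighted hβ0.le (by linarith : (0:ℝ) ≤ 1 - β)
      hx0 zero_le_one (by ring)
    simpa [Real.one_rpow] using h
  have hab : b ^ β = a ^ β * (b / a) ^ β := by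
    rw [← Real.mul_rpow ha.le hx0]
    congr 1
    field_simp
  have hpow : 0 < a ^ β := Real.rpow_pos_of_pos ha β
  have h1 : a ^ β * (β * (1 - b / a)) ≤ a ^ β - b ^ β := by
    rw [hab]
    nlinarith [key, hpow.le]
  calc β * (a ^ (β - 1) * (a - b)) = a ^ β * (β * (1 - b / a)) := by
        rw [Real.rpow_sub ha, Real.rpow_one]
        field_simp
    _ ≤ _ := h1

set_option maxHeartbeats 1000000

lemma telescope_Icc (f : ℕ → ℝ) (a b : ℕ) (hab : a ≤ b) :
    ∑ i ∈ Finset.Icc a b, (f i - f (i + 1)) = f a - f (b + 1) := by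
  induction b with
  | zero =>
    interval_cases a
    simp
  | succ b ih =>
    rcases Nat.lt_or_ge a (b + 1) with h | h
    · rw [Finset.sum_Icc_succ_top (by omega), ih (by omega)]
      ring
    · have : a = b + 1 := by omega
      subst this
      simp

/-- with `ρ = d^{2α-4} 2^{-d} e^{-2^d d^{4-2α}}`, `ω < ρ` and `θ ≤ 1/α`,
there is a constant `C > 0` independent of `n` such that for every `n` with `t_n > 1`,
writing `n* = max{i : t_n - t_i > 1}`, one has
`∑_{i=n*+1}^{n-1} (t_n - t_i)^{-1/α} γ_i^{1+θ} ≤ C e^{ρ(1+γ_1)} γ_n^θ`. -/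
theorem stmt_2 (α θ : ℝ) (hα1 : 1 < α) (hα2 : α < 2) (hθ0 : 0 < θ) (hθ1 : θ ≤ 1)
    (hθα : θ ≤ 1 / α)
    (γ : ℕ → ℝ) (hγpos : ∀ n, 0 < γ n) (hγdec : ∀ n, γ (n + 1) ≤ γ n)
    (hγlim : Tendsto γ atTop (nhds 0))
    (hγsum : Tendsto (fun n => ∑ i ∈ Finset.range n, γ (i + 1)) atTop atTop)
    (t : ℕ → ℝ) (ht : ∀ n, t n = ∑ i ∈ Finset.range n, γ (i + 1))
    (ω : ℝ)
    (hω : (ω : EReal) =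
      limsup (fun k => (((γ k ^ θ - γ (k + 1) ^ θ) / γ (k + 1) ^ (1 + θ) : ℝ) : EReal)) atTop)
    (d : ℕ) (hd : 1 ≤ d) (ρ : ℝ)
    (hρ : ρ = (d : ℝ) ^ (2 * α - 4) * (2 : ℝ) ^ (-(d : ℝ)) *
      Real.exp (-(2 : ℝ) ^ (d : ℝ) * (d : ℝ) ^ (4 - 2 * α)))
    (hωρ : ω < ρ) :
    ∃ C > 0, ∀ n : ℕ, 1 < t n → ∀ nstar : ℕ,
      IsGreatest {i : ℕ | 1 < t n - t i} nstar →
      ∑ i ∈ Finset.Icc (nstar + 1) (n - 1), (t n - t i) ^ (-(1 / α)) * γ i ^ (1 + θ)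
        ≤ C * Real.exp (ρ * (1 + γ 1)) * γ n ^ θ := by
  have hα0 : (0:ℝ) < α := by linarith
  have hd0 : (0:ℝ) < (d:ℝ) := by exact_mod_cast Nat.lt_of_lt_of_le Nat.zero_lt_one hd
  have hρpos : 0 < ρ := by
    rw [hρ]
    exact mul_pos (mul_pos (Real.rpow_pos_of_pos hd0 _)
      (Real.rpow_pos_of_pos two_pos _)) (Real.exp_pos _)
  have hγanti : Antitone γ := antitone_nat_of_succ_le hγdec
  have htsucc : ∀ m, t (m + 1) = t m + γ (m + 1) := by
    intro m
    rw [ht, ht, Finset.sum_range_succ]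
  have htmono : Monotone t :=
    monotone_nat_of_le_succ (fun m => by rw [htsucc]; linarith [(hγpos (m + 1)).le])
  -- Step A: eventually γ k ^ θ ≤ γ (k+1) ^ θ * (1 + ρ * γ (k+1))
  have hlim : ∀ᶠ k in atTop,
      ((γ k ^ θ - γ (k + 1) ^ θ) / γ (k + 1) ^ (1 + θ) : ℝ) < ρ := by
    have h1 : limsup (fun k =>
        (((γ k ^ θ - γ (k + 1) ^ θ) / γ (k + 1) ^ (1 + θ) : ℝ) : EReal)) atTop < (ρ : EReal) := by
      rw [← hω]
      exact_mod_cast hωρ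
    filter_upwards [eventually_lt_of_limsup_lt h1] with k hk
    exact_mod_cast hk
  obtain ⟨K, hK⟩ := eventually_atTop.mp hlim
  have hKstep : ∀ k, K ≤ k → γ k ^ θ ≤ γ (k + 1) ^ θ * (1 + ρ * γ (k + 1)) := by
    intro k hk
    have h := hK k hk
    have hpos : 0 < γ (k + 1) ^ (1 + θ) := Real.rpow_pos_of_pos (hγpos _) _
    rw [div_lt_iff₀ hpos] at h
    have hexp : γ (k + 1) ^ (1 + θ) = γ (k + 1) * γ (k + 1) ^ θ := by
      rw [Real.rpow_add (hγpos _), Real.rpow_one]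
    rw [hexp] at h
    nlinarith [h]
  -- chain estimate
  have hchain : ∀ i, K ≤ i → ∀ m, i ≤ m →
      γ i ^ θ ≤ γ m ^ θ * Real.exp (ρ * (t m - t i)) := by
    intro i hKi m him
    induction m, him using Nat.le_induction with
    | base => simp
    | succ m him ih =>
      have h1 : γ m ^ θ ≤ γ (m + 1) ^ θ * (1 + ρ * γ (m + 1)) :=
        hKstep m (le_trans hKi him)
      have h2 : 1 + ρ * γ (m + 1) ≤ Real.exp (ρ * γ (m + 1)) := by
        have := Real.add_one_le_exp (ρ * γ (m + 1))
        linarith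
      have hθnn : (0:ℝ) ≤ γ (m + 1) ^ θ := (Real.rpow_pos_of_pos (hγpos _) θ).le
      calc γ i ^ θ ≤ γ m ^ θ * Real.exp (ρ * (t m - t i)) := ih
        _ ≤ (γ (m + 1) ^ θ * Real.exp (ρ * γ (m + 1))) * Real.exp (ρ * (t m - t i)) := by
            apply mul_le_mul_of_nonneg_right _ (Real.exp_pos _).le
            exact h1.trans (mul_le_mul_of_nonneg_left h2 hθnn)
        _ = γ (m + 1) ^ θ * Real.exp (ρ * (t (m + 1) - t i)) := by
            rw [htsucc m, mul_assoc, ← Real.exp_add]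
            congr 2
            ring
  -- step estimate on γ itself
  set B : ℝ := (1 + ρ * γ 1) ^ (1 / θ) with hBdef
  have h1ρ : (0:ℝ) < 1 + ρ * γ 1 := by
    have := hγpos 1
    nlinarith
  have hBpos : 0 < B := Real.rpow_pos_of_pos h1ρ _
  have hBstep : ∀ k, K ≤ k → γ k ≤ γ (k + 1) * B := by
    intro k hk
    have hg1 : γ (k + 1) ≤ γ 1 := by
      rcases Nat.lt_or_ge k 1 with h | h
      · interval_cases k
        exact le_rfl
      · exact hγanti (by omega)
    have h1 : γ k ^ θ ≤ γ (k + 1) ^ θ * (1 + ρ * γ 1) := by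
      have := hKstep k hk
      have hθnn : (0:ℝ) ≤ γ (k + 1) ^ θ := (Real.rpow_pos_of_pos (hγpos _) θ).le
      nlinarith [mul_le_mul_of_nonneg_left hg1 (mul_nonneg hρpos.le hθnn)]
    have h2 : (γ k ^ θ) ^ (1 / θ) ≤ (γ (k + 1) ^ θ * (1 + ρ * γ 1)) ^ (1 / θ) :=
      Real.rpow_le_rpow (Real.rpow_pos_of_pos (hγpos k) θ).le h1 (by positivity)
    have hid : ∀ x : ℝ, 0 < x → (x ^ θ) ^ (1 / θ) = x := by
      intro x hx
      rw [← Real.rpow_mul hx.le, mul_one_div, div_self (ne_of_gt hθ0), Real.rpow_one]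
    rw [hid _ (hγpos k),
      Real.mul_rpow (Real.rpow_pos_of_pos (hγpos _) θ).le h1ρ.le,
      hid _ (hγpos (k + 1))] at h2
    exact h2
  -- threshold N
  obtain ⟨N, hN⟩ := eventually_atTop.mp (hγsum.eventually_ge_atTop (2 + t K))
  -- constants
  set β : ℝ := 1 - 1 / α with hβdef
  have hβ0 : 0 < β := by
    have : 1 / α < 1 := by
      rw [div_lt_one hα0]
      exact hα1
    simp only [hβdef]
    linarith
  have hβ1 : β ≤ 1 := by
    have : 0 < 1 / α := by positivity
    simp only [hβdef]
    linarith
  set Cmain : ℝ := Real.exp ρ * B / β with hCmaindef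
  have hCmainpos : 0 < Cmain := by positivity
  set M : ℕ → ℝ := fun m => (m : ℝ) * γ m ^ (-(1 / α)) * γ 1 ^ (1 + θ) with hMdef
  have hMnn : ∀ m, 0 ≤ M m := by
    intro m
    have : (0:ℝ) < γ m ^ (-(1 / α)) := Real.rpow_pos_of_pos (hγpos m) _
    have : (0:ℝ) < γ 1 ^ (1 + θ) := Real.rpow_pos_of_pos (hγpos 1) _
    positivity
  set D : ℝ := ∑ m ∈ Finset.range N, (M m / γ m ^ θ) with hDdef
  have hDnn : 0 ≤ D := by
    apply Finset.sum_nonneg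
    intro m _
    exact div_nonneg (hMnn m) (Real.rpow_pos_of_pos (hγpos m) θ).le
  refine ⟨Cmain + D + 1, by positivity, ?_⟩
  intro n hn nstar hstar
  have hexp1 : (1:ℝ) ≤ Real.exp (ρ * (1 + γ 1)) := by
    have h0 : 0 ≤ ρ * (1 + γ 1) := by nlinarith [hγpos 1]
    have := Real.add_one_le_exp (ρ * (1 + γ 1))
    linarith
  have hγnθ : (0:ℝ) < γ n ^ θ := Real.rpow_pos_of_pos (hγpos n) θ
  -- basic facts about n, nstar
  have hn1 : 1 ≤ n := by
    by_contra h
    push_neg at h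
    interval_cases n
    rw [ht] at hn
    simp at hn
    linarith
  obtain ⟨p, rfl⟩ : ∃ p, n = p + 1 := ⟨n - 1, by omega⟩
  simp only [Nat.add_sub_cancel]
  have hstar1 : t (p + 1) - t (nstar + 1) ≤ 1 := by
    by_contra h
    push_neg at h
    have := hstar.2 h
    omega
  have hstarn : nstar < p + 1 := by
    by_contra h
    push_neg at h
    have := htmono h
    have h1 := hstar.1
    simp only [Set.mem_setOf_eq] at h1
    linarith
  -- facts about indices in the sum
  have hfacts : ∀ i ∈ Finset.Icc (nstar + 1) p,
      γ (p + 1) ≤ t (p + 1) - t i ∧ t (p + 1) - t i ≤ 1 ∧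
        0 ≤ t (p + 1) - t (i + 1) ∧ t (p + 1) - t (i + 1) ≤ t (p + 1) - t i ∧
        (t (p + 1) - t i) - (t (p + 1) - t (i + 1)) = γ (i + 1) := by
    intro i hi
    rw [Finset.mem_Icc] at hi
    obtain ⟨hi1, hi2⟩ := hi
    have h1 : t i ≤ t p := htmono hi2
    have h2 : t (p + 1) = t p + γ (p + 1) := htsucc p
    have h3 : t (nstar + 1) ≤ t i := htmono hi1
    have h4 : t (i + 1) ≤ t (p + 1) := htmono (by omega)
    have h5 : t i ≤ t (i + 1) := htmono (Nat.le_succ i)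
    have h6 : t (i + 1) = t i + γ (i + 1) := htsucc i
    refine ⟨by linarith, by linarith, by linarith, by linarith, by linarith⟩
  by_cases hcase : N ≤ p + 1
  · -- large n
    have hKstar : K ≤ nstar + 1 := by
      by_contra h
      push_neg at h
      have h1 : nstar + 1 ≤ K := by omega
      have h2 : t (nstar + 1) ≤ t K := htmono h1
      have h3 : 2 + t K ≤ t (p + 1) := by
        have := hN (p + 1) hcase
        rw [ht (p + 1)]
        exact this
      linarith
    set g : ℕ → ℝ := fun i => (t (p + 1) - t i) ^ β with hgdef
    have hterm : ∀ i ∈ Finset.Icc (nstar + 1) p,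
        (t (p + 1) - t i) ^ (-(1 / α)) * γ i ^ (1 + θ)
          ≤ Cmain * γ (p + 1) ^ θ * (g i - g (i + 1)) := by
      intro i hi
      obtain ⟨ha1, ha2, hb1, hba, habγ⟩ := hfacts i hi
      rw [Finset.mem_Icc] at hi
      have hKi : K ≤ i := by omega
      have ha : 0 < t (p + 1) - t i := lt_of_lt_of_le (hγpos (p + 1)) ha1
      set a : ℝ := t (p + 1) - t i
      set b : ℝ := t (p + 1) - t (i + 1)
      have hsplit : γ i ^ (1 + θ) = γ i * γ i ^ θ := by
        rw [Real.rpow_add (hγpos i), Real.rpow_one]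
      have hγθ : γ i ^ θ ≤ γ (p + 1) ^ θ * Real.exp ρ := by
        have h1 := hchain i hKi (p + 1) (by omega)
        have h2 : Real.exp (ρ * a) ≤ Real.exp ρ := by
          apply Real.exp_le_exp.mpr
          nlinarith
        calc γ i ^ θ ≤ γ (p + 1) ^ θ * Real.exp (ρ * a) := h1
          _ ≤ γ (p + 1) ^ θ * Real.exp ρ :=
            mul_le_mul_of_nonneg_left h2 (Real.rpow_pos_of_pos (hγpos _) θ).le
      have hγi : γ i ≤ γ (i + 1) * B := hBstep i hKi
      have hkey : β * (a ^ (β - 1) * (a - b)) ≤ a ^ β - b ^ β :=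
        rpow_concave_aux hβ0 hβ1 hb1 hba ha
      have hβm1 : β - 1 = -(1 / α) := by
        simp only [hβdef]
        ring
      have step2 : a ^ (-(1 / α)) * γ (i + 1) ≤ (a ^ β - b ^ β) / β := by
        rw [le_div_iff₀ hβ0]
        calc a ^ (-(1 / α)) * γ (i + 1) * β = β * (a ^ (β - 1) * (a - b)) := by
              rw [hβm1, habγ]
              ring
          _ ≤ a ^ β - b ^ β := hkey
      have h0 : (0:ℝ) < a ^ (-(1 / α)) := Real.rpow_pos_of_pos ha _
      calc a ^ (-(1 / α)) * γ i ^ (1 + θ)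
          = a ^ (-(1 / α)) * (γ i * γ i ^ θ) := by rw [hsplit]
        _ ≤ a ^ (-(1 / α)) * ((γ (i + 1) * B) * (γ (p + 1) ^ θ * Real.exp ρ)) := by
            apply mul_le_mul_of_nonneg_left _ h0.le
            exact mul_le_mul hγi hγθ (Real.rpow_pos_of_pos (hγpos i) θ).le
              (mul_pos (hγpos (i + 1)) hBpos).le
        _ = (Real.exp ρ * B * γ (p + 1) ^ θ) * (a ^ (-(1 / α)) * γ (i + 1)) := by
            ring
        _ ≤ (Real.exp ρ * B * γ (p + 1) ^ θ) * ((a ^ β - b ^ β) / β) := by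
            apply mul_le_mul_of_nonneg_left step2 (by positivity)
        _ = Cmain * γ (p + 1) ^ θ * (a ^ β - b ^ β) := by
            rw [hCmaindef]
            field_simp
        _ = Cmain * γ (p + 1) ^ θ * (g i - g (i + 1)) := rfl
    have hsum1 : ∑ i ∈ Finset.Icc (nstar + 1) p,
        (t (p + 1) - t i) ^ (-(1 / α)) * γ i ^ (1 + θ)
          ≤ ∑ i ∈ Finset.Icc (nstar + 1) p, Cmain * γ (p + 1) ^ θ * (g i - g (i + 1)) :=
      Finset.sum_le_sum hterm
    have hγpθ : (0:ℝ) < γ (p + 1) ^ θ := Real.rpow_pos_of_pos (hγpos _) θ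
    have hsum2 : ∑ i ∈ Finset.Icc (nstar + 1) p, (g i - g (i + 1)) ≤ 1 := by
      rcases Nat.lt_or_ge p (nstar + 1) with h | h
      · rw [Finset.Icc_eq_empty (by omega)]
        simp
      · rw [telescope_Icc g (nstar + 1) p h]
        have hg1 : g (nstar + 1) ≤ 1 := by
          apply Real.rpow_le_one _ hstar1 hβ0.le
          have := htmono (show nstar + 1 ≤ p + 1 by omega)
          linarith
        have hg2 : g (p + 1) = 0 := by
          simp only [hgdef]
          rw [sub_self, Real.zero_rpow (ne_of_gt hβ0)]
        linarith
    calc ∑ i ∈ Finset.Icc (nstar + 1) p,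
        (t (p + 1) - t i) ^ (-(1 / α)) * γ i ^ (1 + θ)
        ≤ ∑ i ∈ Finset.Icc (nstar + 1) p, Cmain * γ (p + 1) ^ θ * (g i - g (i + 1)) := hsum1
      _ = Cmain * γ (p + 1) ^ θ * ∑ i ∈ Finset.Icc (nstar + 1) p, (g i - g (i + 1)) := by
          rw [Finset.mul_sum]
      _ ≤ Cmain * γ (p + 1) ^ θ * 1 := by
          apply mul_le_mul_of_nonneg_left hsum2 (by positivity)
      _ ≤ (Cmain + D + 1) * Real.exp (ρ * (1 + γ 1)) * γ (p + 1) ^ θ := by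
          rw [mul_one]
          have h1 : Cmain + D + 1 ≤ (Cmain + D + 1) * Real.exp (ρ * (1 + γ 1)) :=
            le_mul_of_one_le_right (by positivity) hexp1
          apply mul_le_mul_of_nonneg_right _ hγpθ.le
          linarith
  · -- small n
    push_neg at hcase
    have hterm : ∀ i ∈ Finset.Icc (nstar + 1) p,
        (t (p + 1) - t i) ^ (-(1 / α)) * γ i ^ (1 + θ)
          ≤ γ (p + 1) ^ (-(1 / α)) * γ 1 ^ (1 + θ) := by
      intro i hi
      obtain ⟨ha1, _, _, _, _⟩ := hfacts i hi
      rw [Finset.mem_Icc] at hi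
      have h1 : (t (p + 1) - t i) ^ (-(1 / α)) ≤ γ (p + 1) ^ (-(1 / α)) :=
        Real.rpow_le_rpow_of_nonpos (hγpos (p + 1)) ha1 (neg_nonpos.mpr (by positivity))
      have h2 : γ i ^ (1 + θ) ≤ γ 1 ^ (1 + θ) := by
        apply Real.rpow_le_rpow (hγpos i).le _ (by positivity)
        exact hγanti (by omega)
      exact mul_le_mul h1 h2 (Real.rpow_pos_of_pos (hγpos i) _).le
        (Real.rpow_pos_of_pos (hγpos (p + 1)) _).le
    have hcard : (Finset.Icc (nstar + 1) p).card ≤ p + 1 := by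
      rw [Nat.card_Icc]
      omega
    have hS : ∑ i ∈ Finset.Icc (nstar + 1) p,
        (t (p + 1) - t i) ^ (-(1 / α)) * γ i ^ (1 + θ) ≤ M (p + 1) := by
      calc ∑ i ∈ Finset.Icc (nstar + 1) p,
          (t (p + 1) - t i) ^ (-(1 / α)) * γ i ^ (1 + θ)
          ≤ (Finset.Icc (nstar + 1) p).card •
            (γ (p + 1) ^ (-(1 / α)) * γ 1 ^ (1 + θ)) :=
            Finset.sum_le_card_nsmul _ _ _ hterm
        _ = ((Finset.Icc (nstar + 1) p).card : ℝ) *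
            (γ (p + 1) ^ (-(1 / α)) * γ 1 ^ (1 + θ)) := by
            rw [nsmul_eq_mul]
        _ ≤ ((p : ℝ) + 1) * (γ (p + 1) ^ (-(1 / α)) * γ 1 ^ (1 + θ)) := by
            apply mul_le_mul_of_nonneg_right _
              (mul_pos (Real.rpow_pos_of_pos (hγpos (p + 1)) _)
                (Real.rpow_pos_of_pos (hγpos 1) _)).le
            exact_mod_cast hcard
        _ = M (p + 1) := by
            simp only [hMdef, Nat.cast_add, Nat.cast_one]
            ring
    have hγpθ : (0:ℝ) < γ (p + 1) ^ θ := Real.rpow_pos_of_pos (hγpos _) θ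
    have hD1 : M (p + 1) / γ (p + 1) ^ θ ≤ D := by
      rw [hDdef]
      apply Finset.single_le_sum (f := fun m => M m / γ m ^ θ)
        (fun m _ => div_nonneg (hMnn m) (Real.rpow_pos_of_pos (hγpos m) θ).le)
      exact Finset.mem_range.mpr hcase
    have hM : M (p + 1) ≤ D * γ (p + 1) ^ θ := by
      exact (div_le_iff₀ hγpθ).mp hD1
    calc ∑ i ∈ Finset.Icc (nstar + 1) p,
        (t (p + 1) - t i) ^ (-(1 / α)) * γ i ^ (1 + θ)
        ≤ M (p + 1) := hS
      _ ≤ D * γ (p + 1) ^ θ := hM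
      _ ≤ (Cmain + D + 1) * Real.exp (ρ * (1 + γ 1)) * γ (p + 1) ^ θ := by
          have h1 : Cmain + D + 1 ≤ (Cmain + D + 1) * Real.exp (ρ * (1 + γ 1)) :=
            le_mul_of_one_le_right (by positivity) hexp1
          apply mul_le_mul_of_nonneg_right _ hγpθ.le
          linarith
end

section
/- Let (γ_n)_{n≥1} be a decreasing sequence of positive real numbers, t_n = ∑_{i=1}^n γ_i, let a > 0, n₀ ∈ ℕ, and let (u_n)_{n≥n₀} be nonnegative real numbers satisfying u_{n+1} ≤ e^{−a γ_{n+1}} u_n + γ_{n+1} for all n ≥ n₀. Then for all n ≥ n₀, u_n ≤ e^{−a (t_n − t_{n₀})} u_{n₀} + e^{a γ_1}/a. -/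
open Filter

/-- a discrete Gronwall-type estimate: if `u_{n+1} ≤ e^{-a γ_{n+1}} u_n + γ_{n+1}`
for `n ≥ n₀`, where `(γ_n)` is a decreasing sequence of positive reals with partial sums `t_n`,
then `u_n ≤ e^{-a(t_n - t_{n₀})} u_{n₀} + e^{a γ_1}/a` for all `n ≥ n₀`. -/
theorem stmt_4 (γ : ℕ → ℝ) (hγpos : ∀ n, 0 < γ n) (hγdec : ∀ n, γ (n + 1) ≤ γ n)
    (t : ℕ → ℝ) (ht : ∀ n, t n = ∑ i ∈ Finset.range n, γ (i + 1))
    (a : ℝ) (ha : 0 < a) (n₀ : ℕ) (u : ℕ → ℝ)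
    (hupos : ∀ n, n₀ ≤ n → 0 ≤ u n)
    (hrec : ∀ n, n₀ ≤ n → u (n + 1) ≤ Real.exp (-a * γ (n + 1)) * u n + γ (n + 1)) :
    ∀ n, n₀ ≤ n → u n ≤ Real.exp (-a * (t n - t n₀)) * u n₀ + Real.exp (a * γ 1) / a := by
  set C : ℝ := Real.exp (a * γ 1) / a with hC
  have hCpos : 0 < C := div_pos (Real.exp_pos _) ha
  -- key: for 0 < g ≤ γ 1, g + exp(-a*g) * C ≤ C
  have key : ∀ g : ℝ, 0 < g → g ≤ γ 1 → g + Real.exp (-a * g) * C ≤ C := by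
    intro g hg hg1
    have h1 : a * g + 1 ≤ Real.exp (a * g) := Real.add_one_le_exp _
    -- C * (1 - exp(-a g)) ≥ g * exp(a(γ1 - g)) ≥ g
    have hE : Real.exp (-a * g) = (Real.exp (a * g))⁻¹ := by
      rw [← Real.exp_neg]; ring_nf
    have hexp_pos : (0:ℝ) < Real.exp (a * g) := Real.exp_pos _
    rw [hE]
    have h2 : g * Real.exp (a * g) + Real.exp (a * γ 1) / a ≤ Real.exp (a * γ 1) / a * Real.exp (a * g) := by
      have hmono : Real.exp (a * g) ≤ Real.exp (a * γ 1) :=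
        Real.exp_le_exp.2 (by nlinarith)
      have h3 : Real.exp (a * g) * (a * g) ≤ Real.exp (a * g) * (Real.exp (a * g) - 1) := by
        nlinarith
      have h4 : Real.exp (a * g) * (a * g) ≤ Real.exp (a * γ 1) * (Real.exp (a * g) - 1) := by
        nlinarith [mul_le_mul_of_nonneg_right hmono (by nlinarith : (0:ℝ) ≤ Real.exp (a * g) - 1)]
      rw [div_mul_eq_mul_div, le_div_iff₀ ha, add_mul, div_mul_cancel₀ _ (ne_of_gt ha)]
      nlinarith
    calc g + (Real.exp (a * g))⁻¹ * C
        = (g * Real.exp (a * g) + C) / Real.exp (a * g) := by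
          field_simp
      _ ≤ C := by
          rw [div_le_iff₀ hexp_pos]; simpa [hC] using h2
  intro n hn
  induction n, hn using Nat.le_induction with
  | base =>
      simp only [sub_self, mul_zero, Real.exp_zero, one_mul]
      linarith [hupos n₀ le_rfl, hCpos]
  | succ n hn ih =>
      have hg1 : γ (n + 1) ≤ γ 1 := by
        have : Antitone γ := antitone_nat_of_succ_le hγdec
        exact this (Nat.succ_le_succ (Nat.zero_le n))
      have hstep : t (n + 1) = t n + γ (n + 1) := by
        rw [ht, ht, Finset.sum_range_succ]
      have h1 := hrec n hn
      have h2 : Real.exp (-a * γ (n + 1)) * u n ≤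
          Real.exp (-a * γ (n + 1)) * (Real.exp (-a * (t n - t n₀)) * u n₀ + C) :=
        mul_le_mul_of_nonneg_left ih (le_of_lt (Real.exp_pos _))
      have h3 : Real.exp (-a * γ (n + 1)) * Real.exp (-a * (t n - t n₀))
          = Real.exp (-a * (t (n + 1) - t n₀)) := by
        rw [← Real.exp_add, hstep]; ring_nf
      have h4 := key (γ (n + 1)) (hγpos (n + 1)) hg1
      calc u (n + 1) ≤ Real.exp (-a * γ (n + 1)) * u n + γ (n + 1) := h1
        _ ≤ Real.exp (-a * γ (n + 1)) * (Real.exp (-a * (t n - t n₀)) * u n₀ + C)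
            + γ (n + 1) := by linarith
        _ = Real.exp (-a * (t (n + 1) - t n₀)) * u n₀
            + (γ (n + 1) + Real.exp (-a * γ (n + 1)) * C) := by
            rw [mul_add, ← mul_assoc, h3]; ring
        _ ≤ Real.exp (-a * (t (n + 1) - t n₀)) * u n₀ + C := by linarith
end

section
/- Suppose additionally that γ_1 < 1 and ω < 1. Then lim_{n→∞} (∏_{j=1}^{n} (1 − γ_j)) / γ_n^θ = 0. -/
open Filter

/-- if in addition `γ_1 < 1` and `ω < 1`, then
`lim_{n→∞} (∏_{j=1}^n (1 - γ_j)) / γ_n^θ = 0`. -/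
theorem stmt_15 (α θ : ℝ) (hα1 : 1 < α) (hα2 : α < 2) (hθ0 : 0 < θ) (hθ1 : θ ≤ 1)
    (γ : ℕ → ℝ) (hγpos : ∀ n, 0 < γ n) (hγdec : ∀ n, γ (n + 1) ≤ γ n)
    (hγlim : Tendsto γ atTop (nhds 0))
    (hγsum : Tendsto (fun n => ∑ i ∈ Finset.range n, γ (i + 1)) atTop atTop)
    (t : ℕ → ℝ) (ht : ∀ n, t n = ∑ i ∈ Finset.range n, γ (i + 1))
    (ω : ℝ)
    (hω : (ω : EReal) =
      limsup (fun k => (((γ k ^ θ - γ (k + 1) ^ θ) / γ (k + 1) ^ (1 + θ) : ℝ) : EReal)) atTop)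
    (hγ1 : γ 1 < 1) (hω1 : ω < 1) :
    Tendsto (fun n => (∏ j ∈ Finset.Icc 1 n, (1 - γ j)) / γ n ^ θ) atTop (nhds 0) := by
  have hanti : Antitone γ := antitone_nat_of_succ_le hγdec
  have hγlt1 : ∀ n, 1 ≤ n → γ n < 1 := fun n hn => lt_of_le_of_lt (hanti hn) hγ1
  set P : ℕ → ℝ := fun n => ∏ j ∈ Finset.Icc 1 n, (1 - γ j) with hP
  have hPpos : ∀ n, 0 < P n := by
    intro n; apply Finset.prod_pos; intro j hj
    have h1 : 1 ≤ j := (Finset.mem_Icc.mp hj).1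
    linarith [hγlt1 j h1]
  set u : ℕ → ℝ := fun n => P n / γ n ^ θ with hu
  have hupos : ∀ n, 0 < u n := fun n => div_pos (hPpos n) (Real.rpow_pos_of_pos (hγpos n) θ)
  set c : ℝ := max ((1 + ω) / 2) (1 / 2) with hc
  have hc1 : c < 1 := by apply max_lt <;> linarith
  have hc0 : (0:ℝ) < c := lt_of_lt_of_le (by norm_num) (le_max_right _ _)
  have hωc : ω < c := lt_of_lt_of_le (by linarith) (le_max_left _ _)
  have hev : ∀ᶠ k in atTop, (γ k ^ θ - γ (k + 1) ^ θ) / γ (k + 1) ^ (1 + θ) < c := by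
    have h1 : limsup (fun k => (((γ k ^ θ - γ (k + 1) ^ θ) / γ (k + 1) ^ (1 + θ) : ℝ) : EReal))
        atTop < (c : EReal) := by
      rw [← hω]; exact_mod_cast hωc
    filter_upwards [eventually_lt_of_limsup_lt h1] with k hk
    exact_mod_cast hk
  obtain ⟨N, hN⟩ := eventually_atTop.mp hev
  have hstep : ∀ n, N ≤ n → u (n + 1) ≤ u n * Real.exp (-(1 - c) * γ (n + 1)) := by
    intro n hn
    have hγn1 := hγpos (n + 1)
    have hγn := hγpos n
    have hr := hN n hn
    have hpow : γ (n + 1) ^ (1 + θ) = γ (n + 1) * γ (n + 1) ^ θ := by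
      rw [Real.rpow_add hγn1, Real.rpow_one]
    have hppos : (0:ℝ) < γ (n + 1) ^ θ := Real.rpow_pos_of_pos hγn1 θ
    have hppos' : (0:ℝ) < γ n ^ θ := Real.rpow_pos_of_pos hγn θ
    have hbound : γ n ^ θ ≤ γ (n + 1) ^ θ * (1 + c * γ (n + 1)) := by
      have h2 := (div_lt_iff₀ (by positivity : (0:ℝ) < γ (n + 1) ^ (1 + θ))).mp hr
      rw [hpow] at h2; nlinarith
    have h1γ : 0 < 1 - γ (n + 1) := by linarith [hγlt1 (n + 1) (by omega)]
    have hP1 : P (n + 1) = P n * (1 - γ (n + 1)) := by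
      simp only [hP]
      exact Finset.prod_Icc_succ_top (by omega) _
    have hfac : u (n + 1) = u n * ((1 - γ (n + 1)) * (γ n ^ θ / γ (n + 1) ^ θ)) := by
      simp only [hu, hP1]
      field_simp
    have hfac2 : (1 - γ (n + 1)) * (γ n ^ θ / γ (n + 1) ^ θ) ≤
        Real.exp (-(1 - c) * γ (n + 1)) := by
      have hdiv : γ n ^ θ / γ (n + 1) ^ θ ≤ 1 + c * γ (n + 1) :=
        (div_le_iff₀ hppos).mpr (by linarith [hbound])
      have hexp := Real.add_one_le_exp (-(1 - c) * γ (n + 1))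
      have h3 : (1 - γ (n + 1)) * (γ n ^ θ / γ (n + 1) ^ θ) ≤
          (1 - γ (n + 1)) * (1 + c * γ (n + 1)) :=
        mul_le_mul_of_nonneg_left hdiv h1γ.le
      nlinarith [sq_nonneg (γ (n + 1))]
    calc u (n + 1) = u n * ((1 - γ (n + 1)) * (γ n ^ θ / γ (n + 1) ^ θ)) := hfac
      _ ≤ u n * Real.exp (-(1 - c) * γ (n + 1)) :=
          mul_le_mul_of_nonneg_left hfac2 (hupos n).le
  have hbnd : ∀ n, N ≤ n → u n ≤ u N * Real.exp (-(1 - c) * (t n - t N)) := by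
    intro n hn
    induction n, hn using Nat.le_induction with
    | base => simp
    | succ n hn ih =>
      have ht1 : t (n + 1) = t n + γ (n + 1) := by
        rw [ht, ht, Finset.sum_range_succ]
      calc u (n + 1) ≤ u n * Real.exp (-(1 - c) * γ (n + 1)) := hstep n hn
        _ ≤ u N * Real.exp (-(1 - c) * (t n - t N)) * Real.exp (-(1 - c) * γ (n + 1)) :=
            mul_le_mul_of_nonneg_right ih (Real.exp_pos _).le
        _ = u N * Real.exp (-(1 - c) * (t (n + 1) - t N)) := by
            rw [mul_assoc, ← Real.exp_add, ht1]; ring_nf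
  have httop : Tendsto t atTop atTop := by
    refine hγsum.congr fun n => (ht n).symm
  have hexp0 : Tendsto (fun n => u N * Real.exp (-(1 - c) * (t n - t N))) atTop (nhds 0) := by
    have h1 : Tendsto (fun n => -(1 - c) * (t n - t N)) atTop atBot := by
      have h2 : Tendsto (fun n => t n - t N) atTop atTop :=
        tendsto_atTop_add_const_right _ _ httop
      exact h2.const_mul_atTop_of_neg (by linarith)
    have h3 : Tendsto (fun n => Real.exp (-(1 - c) * (t n - t N))) atTop (nhds 0) :=
      Real.tendsto_exp_atBot.comp h1
    simpa using h3.const_mul (u N)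
  refine tendsto_of_tendsto_of_tendsto_of_le_of_le' tendsto_const_nhds hexp0 ?_ ?_
  · exact Eventually.of_forall fun n => (hupos n).le
  · exact eventually_atTop.mpr ⟨N, hbnd⟩
end

section
/- Let γ_1, …, γ_n be positive real numbers, set t_0 = 0 and t_j = ∑_{i=1}^j γ_i, and let a > 0. Then ∑_{j=1}^{n} γ_j e^{−a(t_n − t_j)} ≤ (1/a)(1 − e^{−a t_n}) + (a/2) e^{−a t_n} ∑_{j=1}^{n} e^{a t_j} γ_j². -/
lemma exp_neg_le_quadratic {x : ℝ} (hx : 0 ≤ x) :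
    Real.exp (-x) ≤ 1 - x + x ^ 2 / 2 := by
  have hE : 1 + x + x ^ 2 / 2 ≤ Real.exp x := Real.quadratic_le_exp_of_nonneg hx
  have hP : Real.exp (-x) * Real.exp x = 1 := by
    rw [← Real.exp_add]; simp
  have hpos : (0:ℝ) < 1 - x + x ^ 2 / 2 := by nlinarith [sq_nonneg (x - 1)]
  have h2 : (1 - x + x ^ 2 / 2) * (1 + x + x ^ 2 / 2) ≤ (1 - x + x ^ 2 / 2) * Real.exp x :=
    mul_le_mul_of_nonneg_left hE hpos.le
  have h3 : Real.exp (-x) * Real.exp x ≤ (1 - x + x ^ 2 / 2) * Real.exp x := by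
    nlinarith [sq_nonneg (x ^ 2)]
  exact le_of_mul_le_mul_right h3 (Real.exp_pos x)

/-- for positive `γ_1, …, γ_n` with partial sums `t_j` and `a > 0`,
`∑_{j=1}^n γ_j e^{-a(t_n - t_j)}
≤ (1/a)(1 - e^{-a t_n}) + (a/2) e^{-a t_n} ∑_{j=1}^n e^{a t_j} γ_j²`. -/
theorem stmt_16 (n : ℕ) (γ : ℕ → ℝ) (hγpos : ∀ i, 0 < γ i)
    (t : ℕ → ℝ) (ht : ∀ j, t j = ∑ i ∈ Finset.range j, γ (i + 1))
    (a : ℝ) (ha : 0 < a) :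
    ∑ j ∈ Finset.Icc 1 n, γ j * Real.exp (-a * (t n - t j))
      ≤ (1 / a) * (1 - Real.exp (-a * t n))
        + (a / 2) * Real.exp (-a * t n) * ∑ j ∈ Finset.Icc 1 n, Real.exp (a * t j) * γ j ^ 2 := by
  have ht0 : t 0 = 0 := by rw [ht]; simp
  have htstep : ∀ i : ℕ, t (i + 1) = t i + γ (i + 1) := by
    intro i; rw [ht, ht, Finset.sum_range_succ]
  -- per-step bound
  have per : ∀ i : ℕ, γ (i + 1) * Real.exp (a * t (i + 1))
      ≤ (Real.exp (a * t (i + 1)) - Real.exp (a * t i)) / a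
        + a / 2 * (Real.exp (a * t (i + 1)) * γ (i + 1) ^ 2) := by
    intro i
    have hg := (hγpos (i + 1)).le
    have hk := exp_neg_le_quadratic (x := a * γ (i + 1)) (by positivity)
    have hEpos := (Real.exp_pos (a * t (i + 1))).le
    have he : Real.exp (a * t i)
        = Real.exp (a * t (i + 1)) * Real.exp (-(a * γ (i + 1))) := by
      rw [← Real.exp_add, htstep]; ring_nf
    rw [he, ← mul_le_mul_iff_right₀ ha, mul_add, mul_div_cancel₀ _ ha.ne']
    nlinarith [mul_le_mul_of_nonneg_left hk hEpos]
  -- summed bound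
  have hsum : ∑ i ∈ Finset.range n, γ (i + 1) * Real.exp (a * t (i + 1))
      ≤ (Real.exp (a * t n) - 1) / a
        + a / 2 * ∑ i ∈ Finset.range n, Real.exp (a * t (i + 1)) * γ (i + 1) ^ 2 := by
    calc ∑ i ∈ Finset.range n, γ (i + 1) * Real.exp (a * t (i + 1))
        ≤ ∑ i ∈ Finset.range n,
            ((Real.exp (a * t (i + 1)) - Real.exp (a * t i)) / a
              + a / 2 * (Real.exp (a * t (i + 1)) * γ (i + 1) ^ 2)) :=
          Finset.sum_le_sum fun i _ => per i
      _ = (∑ i ∈ Finset.range n,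
            (Real.exp (a * t (i + 1)) - Real.exp (a * t i))) / a
          + a / 2 * ∑ i ∈ Finset.range n, Real.exp (a * t (i + 1)) * γ (i + 1) ^ 2 := by
          rw [Finset.sum_add_distrib, Finset.sum_div, ← Finset.mul_sum]
      _ = (Real.exp (a * t n) - 1) / a
          + a / 2 * ∑ i ∈ Finset.range n, Real.exp (a * t (i + 1)) * γ (i + 1) ^ 2 := by
          rw [Finset.sum_range_sub (fun i => Real.exp (a * t i)), ht0]
          simp
  -- rewrite the Icc sums as range sums
  have hIcc : ∀ f : ℕ → ℝ, ∑ j ∈ Finset.Icc 1 n, f j = ∑ i ∈ Finset.range n, f (i + 1) := by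
    intro f
    rw [← Finset.Ico_add_one_right_eq_Icc, Finset.sum_Ico_eq_sum_range]
    simp [add_comm]
  rw [hIcc, hIcc]
  have hEn := Real.exp_pos (a * t n)
  have hinv : Real.exp (-a * t n) = (Real.exp (a * t n))⁻¹ := by
    rw [← Real.exp_neg]; ring_nf
  have hL : ∀ i : ℕ, γ (i + 1) * Real.exp (-a * (t n - t (i + 1)))
      = Real.exp (-a * t n) * (γ (i + 1) * Real.exp (a * t (i + 1))) := by
    intro i
    rw [mul_comm (Real.exp _), mul_assoc, ← Real.exp_add]
    ring_nf
  calc ∑ i ∈ Finset.range n, γ (i + 1) * Real.exp (-a * (t n - t (i + 1)))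
      = Real.exp (-a * t n) * ∑ i ∈ Finset.range n, γ (i + 1) * Real.exp (a * t (i + 1)) := by
        rw [Finset.mul_sum]; exact Finset.sum_congr rfl fun i _ => hL i
    _ ≤ Real.exp (-a * t n) * ((Real.exp (a * t n) - 1) / a
          + a / 2 * ∑ i ∈ Finset.range n, Real.exp (a * t (i + 1)) * γ (i + 1) ^ 2) :=
        mul_le_mul_of_nonneg_left hsum (Real.exp_pos _).le
    _ = 1 / a * (1 - Real.exp (-a * t n))
          + a / 2 * Real.exp (-a * t n)
            * ∑ i ∈ Finset.range n, Real.exp (a * t (i + 1)) * γ (i + 1) ^ 2 := by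
        rw [hinv]
        field_simp
end

section
/- Let α ∈ (1,2) and let (γ_n)_{n≥1} be a decreasing sequence of positive real numbers with lim_{n→∞} γ_n = 0 and ∑_{n=1}^∞ γ_n = ∞. Then liminf_{n→∞} γ_n^{−(2−α)/α} ∑_{j=1}^{n} γ_j^{2/α} ∏_{k=j+1}^{n} (1 − γ_k)² ≥ 1/3 (with the convention that the empty product equals 1). -/
open Filter

lemma key_exp (x : ℝ) (hx0 : 0 ≤ x) (hx : x ≤ 1/3) :
    Real.exp (-(3 * x)) ≤ (1 - x) ^ 2 := by
  have h1 : 1 + 3*x/4 ≤ Real.exp (3*x/4) := by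
    have := Real.add_one_le_exp (3*x/4); linarith
  have h4 : (1 + 3*x/4)^4 ≤ Real.exp (3*x) := by
    calc (1 + 3*x/4)^4 ≤ (Real.exp (3*x/4))^4 := by
          apply pow_le_pow_left₀ (by positivity) h1
      _ = Real.exp (3*x) := by
          rw [← Real.exp_nat_mul]; ring_nf
  have hpoly : 1 ≤ (1-x)^2 * (1 + 3*x/4)^4 := by
    nlinarith [sq_nonneg x, sq_nonneg (1-x), sq_nonneg (x*(1-x))]
  have hone : 1 ≤ (1-x)^2 * Real.exp (3*x) :=
    le_trans hpoly (mul_le_mul_of_nonneg_left h4 (sq_nonneg _))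
  rw [Real.exp_neg, inv_le_iff_one_le_mul₀ (Real.exp_pos _)]
  linarith [hone]

/-- for `α ∈ (1,2)` and a decreasing positive sequence `(γ_n)` with
`γ_n → 0` and `∑ γ_n = ∞`,
`liminf_{n→∞} γ_n^{-(2-α)/α} ∑_{j=1}^n γ_j^{2/α} ∏_{k=j+1}^n (1 - γ_k)² ≥ 1/3`
(empty products equal `1`). -/
theorem stmt_17 (α : ℝ) (hα1 : 1 < α) (hα2 : α < 2)
    (γ : ℕ → ℝ) (hγpos : ∀ n, 0 < γ n) (hγdec : ∀ n, γ (n + 1) ≤ γ n)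
    (hγlim : Tendsto γ atTop (nhds 0))
    (hγsum : Tendsto (fun n => ∑ i ∈ Finset.range n, γ (i + 1)) atTop atTop) :
    (((1 : ℝ) / 3 : ℝ) : EReal)
      ≤ liminf (fun n =>
          ((γ n ^ (-((2 - α) / α)) *
            ∑ j ∈ Finset.Icc 1 n, γ j ^ ((2 : ℝ) / α) *
              ∏ k ∈ Finset.Icc (j + 1) n, (1 - γ k) ^ 2 : ℝ) : EReal)) atTop := by
  have hα0 : (0:ℝ) < α := by linarith
  set β : ℝ := (2 - α) / α with hβdef
  have hβpos : 0 < β := div_pos (by linarith) hα0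
  have hγanti : ∀ m n, m ≤ n → γ n ≤ γ m := by
    intro m n h
    induction n, h using Nat.le_induction with
    | base => exact le_refl _
    | succ n hn ih => exact le_trans (hγdec n) ih
  -- choose N with γ k ≤ 1/3 for k ≥ N
  obtain ⟨N, hN⟩ : ∃ N, ∀ k ≥ N, γ k ≤ 1/3 := by
    have := (hγlim.eventually (gt_mem_nhds (show (0:ℝ) < 1/3 by norm_num)))
    rw [eventually_atTop] at this
    obtain ⟨N, hN⟩ := this
    exact ⟨N, fun k hk => le_of_lt (hN k hk)⟩
  set G : ℕ → ℝ := fun m => ∑ i ∈ Finset.range m, γ (i + 1) with hGdef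
  have hGsub : ∀ j n, j ≤ n → ∑ k ∈ Finset.Icc (j+1) n, γ k = G n - G j := by
    intro j n hn
    induction n, hn using Nat.le_induction with
    | base => simp
    | succ n hn ih =>
      rw [Finset.sum_Icc_succ_top (by omega), ih]
      simp only [hGdef, Finset.sum_range_succ]
      ring
  -- the key lower bound for n ≥ N + 1
  have hmain : ∀ n, N + 1 ≤ n →
      (1 - Real.exp (-(3 * (G n - G N)))) / 3
        ≤ γ n ^ (-β) *
            ∑ j ∈ Finset.Icc 1 n, γ j ^ ((2 : ℝ) / α) *
              ∏ k ∈ Finset.Icc (j + 1) n, (1 - γ k) ^ 2 := by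
    intro n hn
    have hNn : N ≤ n := by omega
    set h : ℕ → ℝ := fun m => Real.exp (-(3 * (G n - G m))) with hhdef
    -- per-term bound
    have hterm : ∀ i ∈ Finset.range (n - N),
        γ n ^ β * ((h (N + 1 + i) - h (N + i)) / 3)
          ≤ γ (N + 1 + i) ^ ((2 : ℝ) / α) *
              ∏ k ∈ Finset.Icc (N + 1 + i + 1) n, (1 - γ k) ^ 2 := by
      intro i hi
      rw [Finset.mem_range] at hi
      set j := N + 1 + i with hjdef
      have hjn : j ≤ n := by omega
      have hjpos : γ j > 0 := hγpos j
      -- (a) product bound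
      have ha : Real.exp (-(3 * (G n - G j))) ≤ ∏ k ∈ Finset.Icc (j+1) n, (1 - γ k) ^ 2 := by
        have : Real.exp (-(3 * (G n - G j)))
            = ∏ k ∈ Finset.Icc (j+1) n, Real.exp (-(3 * γ k)) := by
          rw [← hGsub j n hjn, Finset.mul_sum, ← Finset.sum_neg_distrib, Real.exp_sum]
        rw [this]
        apply Finset.prod_le_prod
        · intro k _; positivity
        · intro k hk
          rw [Finset.mem_Icc] at hk
          exact key_exp (γ k) (le_of_lt (hγpos k)) (hN k (by omega))
      -- (b) rpow bound : γ n ^ β * γ j ≤ γ j ^ (2/α)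
      have hb : γ n ^ β * γ j ≤ γ j ^ ((2:ℝ)/α) := by
        have h2a : (2:ℝ)/α = β + 1 := by rw [hβdef]; field_simp; ring
        rw [h2a, Real.rpow_add hjpos, Real.rpow_one]
        apply mul_le_mul_of_nonneg_right _ (le_of_lt hjpos)
        exact Real.rpow_le_rpow (le_of_lt (hγpos n)) (hγanti j n hjn) (le_of_lt hβpos)
      -- (c) telescoping bound : (h j - h (j-1))/3 ≤ γ j * exp(-(3(Gn - Gj)))
      have hGstep : G j = G (N + i) + γ j := by
        simp only [hGdef, hjdef]
        have : N + 1 + i = (N + i) + 1 := by omega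
        rw [this, Finset.sum_range_succ]
      have hc : (h j - h (N + i)) / 3 ≤ γ j * Real.exp (-(3 * (G n - G j))) := by
        have hexp : h (N + i) = h j * Real.exp (-(3 * γ j)) := by
          simp only [hhdef, ← Real.exp_add, hGstep]; ring_nf
        rw [hexp]
        have h1e : 1 - Real.exp (-(3 * γ j)) ≤ 3 * γ j := by
          have := Real.add_one_le_exp (-(3 * γ j)); linarith
        have hhpos : 0 < h j := Real.exp_pos _
        have : h j - h j * Real.exp (-(3 * γ j)) = h j * (1 - Real.exp (-(3 * γ j))) := by ring
        rw [this]
        calc h j * (1 - Real.exp (-(3 * γ j))) / 3 ≤ h j * (3 * γ j) / 3 := by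
              apply div_le_div_of_nonneg_right _ (by norm_num)
              exact mul_le_mul_of_nonneg_left h1e (le_of_lt hhpos)
          _ = γ j * h j := by ring
          _ = γ j * Real.exp (-(3 * (G n - G j))) := by rw [hhdef]
      -- combine
      calc γ n ^ β * ((h j - h (N + i)) / 3)
          ≤ γ n ^ β * (γ j * Real.exp (-(3 * (G n - G j)))) := by
            apply mul_le_mul_of_nonneg_left hc (Real.rpow_nonneg (le_of_lt (hγpos n)) _)
        _ = (γ n ^ β * γ j) * Real.exp (-(3 * (G n - G j))) := by ring
        _ ≤ γ j ^ ((2:ℝ)/α) * ∏ k ∈ Finset.Icc (j+1) n, (1 - γ k) ^ 2 := by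
            apply mul_le_mul hb ha (le_of_lt (Real.exp_pos _))
            exact Real.rpow_nonneg (le_of_lt (hγpos j)) _
    -- sum the per-term bounds, telescope
    have htel : ∑ i ∈ Finset.range (n - N), (h (N + 1 + i) - h (N + i)) = h n - h N := by
      have := Finset.sum_range_sub (fun i => h (N + i)) (n - N)
      calc ∑ i ∈ Finset.range (n - N), (h (N + 1 + i) - h (N + i))
          = ∑ i ∈ Finset.range (n - N), (h (N + (i+1)) - h (N + i)) := by
            apply Finset.sum_congr rfl; intro i _
            have : N + 1 + i = N + (i + 1) := by omega
            rw [this]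
        _ = h (N + (n - N)) - h (N + 0) := this
        _ = h n - h N := by rw [Nat.add_sub_cancel' hNn]; simp
    have hsum1 : γ n ^ β * ((h n - h N) / 3)
        ≤ ∑ i ∈ Finset.range (n - N), γ (N + 1 + i) ^ ((2 : ℝ) / α) *
            ∏ k ∈ Finset.Icc (N + 1 + i + 1) n, (1 - γ k) ^ 2 := by
      calc γ n ^ β * ((h n - h N) / 3)
          = ∑ i ∈ Finset.range (n - N), γ n ^ β * ((h (N + 1 + i) - h (N + i)) / 3) := by
            rw [← Finset.mul_sum, ← Finset.sum_div, htel]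
        _ ≤ _ := Finset.sum_le_sum hterm
    -- relate the range sum back to the Icc sum
    have hsum2 : ∑ i ∈ Finset.range (n - N), γ (N + 1 + i) ^ ((2 : ℝ) / α) *
            ∏ k ∈ Finset.Icc (N + 1 + i + 1) n, (1 - γ k) ^ 2
        = ∑ j ∈ Finset.Icc (N + 1) n, γ j ^ ((2 : ℝ) / α) *
            ∏ k ∈ Finset.Icc (j + 1) n, (1 - γ k) ^ 2 := by
      rw [show Finset.Icc (N+1) n = Finset.Ico (N+1) (n+1) by rw [Finset.Ico_add_one_right_eq_Icc],
        Finset.sum_Ico_eq_sum_range]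
      have : n + 1 - (N + 1) = n - N := by omega
      rw [this]
    have hsub : ∑ j ∈ Finset.Icc (N + 1) n, γ j ^ ((2 : ℝ) / α) *
            ∏ k ∈ Finset.Icc (j + 1) n, (1 - γ k) ^ 2
        ≤ ∑ j ∈ Finset.Icc 1 n, γ j ^ ((2 : ℝ) / α) *
            ∏ k ∈ Finset.Icc (j + 1) n, (1 - γ k) ^ 2 := by
      apply Finset.sum_le_sum_of_subset_of_nonneg
      · apply Finset.Icc_subset_Icc_left; omega
      · intro j _ _
        apply mul_nonneg (Real.rpow_nonneg (le_of_lt (hγpos j)) _)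
        exact Finset.prod_nonneg fun k _ => sq_nonneg _
    have hS : γ n ^ β * ((h n - h N) / 3)
        ≤ ∑ j ∈ Finset.Icc 1 n, γ j ^ ((2 : ℝ) / α) *
            ∏ k ∈ Finset.Icc (j + 1) n, (1 - γ k) ^ 2 := by
      rw [← hsum2] at hsub; exact le_trans hsum1 hsub
    -- multiply by γ n ^ (-β)
    have hγnpos := hγpos n
    have hinv : γ n ^ (-β) * γ n ^ β = 1 := by
      rw [← Real.rpow_add hγnpos]
      simp
    have hhn : h n = 1 := by simp [hhdef]
    calc (1 - Real.exp (-(3 * (G n - G N)))) / 3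
        = γ n ^ (-β) * (γ n ^ β * ((h n - h N) / 3)) := by
          rw [← mul_assoc, hinv, one_mul, hhn, hhdef]
      _ ≤ _ := by
          apply mul_le_mul_of_nonneg_left hS
          exact Real.rpow_nonneg (le_of_lt hγnpos) _
  -- conclude via liminf
  set g : ℕ → ℝ := fun n => (1 - Real.exp (-(3 * (G n - G N)))) / 3 with hgdef
  have hgtend : Tendsto g atTop (nhds ((1:ℝ)/3)) := by
    have h1 : Tendsto (fun n => G n - G N) atTop atTop :=
      (tendsto_atTop_add_const_right atTop (-(G N)) hγsum).congr
        (fun n => (sub_eq_add_neg _ _).symm)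
    have h3 : Tendsto (fun n => 3 * (G n - G N)) atTop atTop :=
      h1.const_mul_atTop (by norm_num)
    have h2 : Tendsto (fun n => -(3 * (G n - G N))) atTop atBot :=
      tendsto_neg_atTop_atBot.comp h3
    have h4 : Tendsto (fun n => Real.exp (-(3 * (G n - G N)))) atTop (nhds 0) :=
      Real.tendsto_exp_atBot.comp h2
    have h5 : Tendsto (fun n => (1 - Real.exp (-(3 * (G n - G N)))) / 3) atTop
        (nhds ((1 - 0) / 3)) := (tendsto_const_nhds.sub h4).div_const 3
    simpa using h5
  have hev : ∀ᶠ n in atTop, ((g n : ℝ) : EReal)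
      ≤ ((γ n ^ (-β) * ∑ j ∈ Finset.Icc 1 n, γ j ^ ((2 : ℝ) / α) *
          ∏ k ∈ Finset.Icc (j + 1) n, (1 - γ k) ^ 2 : ℝ) : EReal) :=
    eventually_atTop.2 ⟨N + 1, fun n hn => EReal.coe_le_coe_iff.2 (hmain n hn)⟩
  have hco : Tendsto (fun n => ((g n : ℝ) : EReal)) atTop
      (nhds (((1 : ℝ) / 3 : ℝ) : EReal)) := by
    rw [EReal.tendsto_coe]
    exact hgtend
  calc (((1 : ℝ) / 3 : ℝ) : EReal)
      = liminf (fun n => ((g n : ℝ) : EReal)) atTop := hco.liminf_eq.symm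
    _ ≤ _ := liminf_le_liminf hev
end

section
/- Let α ∈ (1,2), let d ≥ 1, let A ∈ ℝ^{d×d} be positive definite, let Λ ≥ 1 satisfy ‖A‖_op ∨ ‖A^{−1}‖_op ≤ Λ, and let 0 < τ ≤ 1/(32Λ⁵). For x, y ∈ ℝ^d with 0 < |x − y| ≤ τ, define q(z) = 1_{{−1/8 < z_1 < 1/8, |z| ≤ 1}} · d_α |z|^{−d−α} (z_1 being the first coordinate of z) and q_Ψ(z) = q(z − A^{−1}(x − y)). Then ∫_{ℝ^d} min(q(z), q_Ψ(z)) dz ≥ (d_α σ_{d−1} / (α 2^{d+α+1})) · (Λ^{−α} − 2^{−α} Λ^{−3α}) · |x − y|^{−α}. -/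
set_option maxHeartbeats 2000000


open MeasureTheory

/-- overlap estimate for a truncated `α`-stable density and its translate.
With `q(z) = 1_{-1/8 < z₁ < 1/8, |z| ≤ 1} d_α |z|^{-d-α}` and
`q_Ψ(z) = q(z - A⁻¹(x-y))`, for `A` positive definite with
`‖A‖_op ∨ ‖A⁻¹‖_op ≤ Λ`, `Λ ≥ 1`, `0 < τ ≤ 1/(32Λ⁵)`, and `0 < |x-y| ≤ τ`, one has
`∫ min(q, q_Ψ) ≥ (d_α σ_{d-1}/(α 2^{d+α+1})) (Λ^{-α} - 2^{-α} Λ^{-3α}) |x-y|^{-α}`. -/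
theorem stmt_18 (d : ℕ) (hd : 0 < d) (α : ℝ) (hα1 : 1 < α) (hα2 : α < 2)
    (dα σ : ℝ)
    (hdα : dα = α * 2 ^ (α - 1) * Real.pi ^ (-(d : ℝ) / 2) *
      Real.Gamma (((d : ℝ) + α) / 2) / Real.Gamma (1 - α / 2))
    (hσ : σ = 2 * Real.pi ^ ((d : ℝ) / 2) / Real.Gamma ((d : ℝ) / 2))
    (A : Matrix (Fin d) (Fin d) ℝ) (hA : A.PosDef)
    (Λ : ℝ) (hΛ : 1 ≤ Λ)
    (hAop : max ‖Matrix.toEuclideanCLM (𝕜 := ℝ) A‖ ‖Matrix.toEuclideanCLM (𝕜 := ℝ) A⁻¹‖ ≤ Λ)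
    (τ : ℝ) (hτ0 : 0 < τ) (hτ : τ ≤ 1 / (32 * Λ ^ 5))
    (x y : EuclideanSpace ℝ (Fin d)) (hxy0 : x ≠ y) (hxy : ‖x - y‖ ≤ τ)
    (q qΨ : EuclideanSpace ℝ (Fin d) → ℝ)
    (hq : ∀ z, q z =
      if -(1 / 8 : ℝ) < z ⟨0, hd⟩ ∧ z ⟨0, hd⟩ < 1 / 8 ∧ ‖z‖ ≤ 1
      then dα / ‖z‖ ^ ((d : ℝ) + α) else 0)
    (hqΨ : ∀ z, qΨ z = q (z - Matrix.toEuclideanCLM (𝕜 := ℝ) A⁻¹ (x - y))) :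
    dα * σ / (α * 2 ^ ((d : ℝ) + α + 1)) * (Λ ^ (-α) - 2 ^ (-α) * Λ ^ (-(3 * α)))
        * ‖x - y‖ ^ (-α)
      ≤ ∫ z, min (q z) (qΨ z) := by
  have hne : Nonempty (Fin d) := ⟨⟨0, hd⟩⟩
  have hnt : Nontrivial (EuclideanSpace ℝ (Fin d)) := inferInstance
  have hα0 : (0:ℝ) < α := by linarith
  have hΛ0 : (0:ℝ) < Λ := by linarith
  have hd1 : (1:ℝ) ≤ (d:ℝ) := by exact_mod_cast hd
  set p : ℝ := (d : ℝ) + α with hp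
  have hp0 : 0 < p := by positivity
  have hdα0 : 0 < dα := by
    rw [hdα]
    have h1 : 0 < Real.Gamma (((d : ℝ) + α) / 2) := Real.Gamma_pos_of_pos (by positivity)
    have h2 : 0 < Real.Gamma (1 - α / 2) := Real.Gamma_pos_of_pos (by linarith)
    have h3 : (0:ℝ) < 2 ^ (α - 1) := Real.rpow_pos_of_pos (by norm_num) _
    have h4 : (0:ℝ) < Real.pi ^ (-(d:ℝ)/2) := Real.rpow_pos_of_pos Real.pi_pos _
    positivity
  set r : ℝ := ‖x - y‖ with hr
  have hr0 : 0 < r := norm_pos_iff.2 (sub_ne_zero.2 hxy0)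
  have hrτ : r ≤ 1 / (32 * Λ ^ 5) := hxy.trans hτ
  set w : EuclideanSpace ℝ (Fin d) := Matrix.toEuclideanCLM (𝕜 := ℝ) A⁻¹ (x - y) with hwdef
  have hwle : ‖w‖ ≤ Λ * r := by
    calc ‖w‖ ≤ ‖Matrix.toEuclideanCLM (𝕜 := ℝ) A⁻¹‖ * ‖x - y‖ :=
      (Matrix.toEuclideanCLM (𝕜 := ℝ) A⁻¹).le_opNorm (x - y)
    _ ≤ Λ * r := by
      apply mul_le_mul_of_nonneg_right ((le_max_right _ _).trans hAop) (norm_nonneg _)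
  have hAw : (Matrix.toEuclideanCLM (𝕜 := ℝ) A) w = x - y := by
    rw [hwdef, ← ContinuousLinearMap.mul_apply, ← map_mul,
      Matrix.mul_nonsing_inv _ hA.det_pos.ne'.isUnit, map_one, ContinuousLinearMap.one_apply]
  have hwne : w ≠ 0 := by
    intro h
    apply hxy0
    rw [← sub_eq_zero, ← hAw, h, map_zero]
  have hw0 : 0 < ‖w‖ := norm_pos_iff.2 hwne
  set a : ℝ := Λ * r with ha
  set b : ℝ := 2 * Λ ^ 3 * r with hb
  have ha0 : 0 < a := by positivity
  have hb0 : 0 < b := by positivity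
  have hΛ3 : Λ ≤ Λ ^ 3 := le_self_pow₀ hΛ (by norm_num)
  have hΛ15 : Λ ≤ Λ ^ 5 := le_self_pow₀ hΛ (by norm_num)
  have hΛ35 : Λ ^ 3 ≤ Λ ^ 5 := pow_le_pow_right₀ hΛ (by norm_num)
  have hab : a ≤ b := by rw [ha, hb]; nlinarith
  have hΛ5 : (0:ℝ) < 32 * Λ ^ 5 := by positivity
  have hr' : r * (32 * Λ ^ 5) ≤ 1 := (le_div_iff₀ hΛ5).1 hrτ
  have hb16 : b ≤ 1 / 16 := by
    rw [hb]
    nlinarith [mul_le_mul_of_nonneg_right hΛ35 hr0.le]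
  have hba : b + a ≤ 3 / 32 := by
    rw [hb, ha]
    nlinarith [mul_le_mul_of_nonneg_right hΛ35 hr0.le, mul_le_mul_of_nonneg_right hΛ15 hr0.le]
  have hcoord : ∀ (v : EuclideanSpace ℝ (Fin d)) (i : Fin d), |v i| ≤ ‖v‖ := by
    intro v i
    rw [EuclideanSpace.norm_eq, ← Real.sqrt_sq_eq_abs]
    apply Real.sqrt_le_sqrt
    simpa using Finset.single_le_sum (f := fun j => ‖v j‖ ^ 2)
      (fun j _ => sq_nonneg _) (Finset.mem_univ i)
  have hq0 : ∀ z, 0 ≤ q z := by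
    intro z
    rw [hq]
    split
    · positivity
    · exact le_refl 0
  have hqval : ∀ z : EuclideanSpace ℝ (Fin d), ‖z‖ ≤ 1 → |z ⟨0, hd⟩| < 1/8 →
      q z = dα / ‖z‖ ^ p := by
    intro z h1 h2
    obtain ⟨l, u⟩ := abs_lt.1 h2
    rw [hq, if_pos ⟨l, u, h1⟩]
  set c : ℝ := dα / 2 ^ p with hc
  have h2p : (0:ℝ) < 2 ^ p := Real.rpow_pos_of_pos two_pos p
  set f : ℝ → ℝ := Set.indicator (Set.Ioc a b) (fun t => c * t ^ (-p)) with hf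
  have hfval : ∀ t : ℝ, 0 < t → c * t ^ (-p) = dα / (2*t) ^ p := by
    intro t ht
    have htp : (0:ℝ) < t ^ p := Real.rpow_pos_of_pos ht p
    rw [Real.mul_rpow (by norm_num) ht.le, Real.rpow_neg ht.le, hc]
    field_simp
  have hpoint : ∀ z, f ‖z‖ ≤ min (q z) (qΨ z) := by
    intro z
    by_cases hz : ‖z‖ ∈ Set.Ioc a b
    · rw [hf, Set.indicator_of_mem hz]
      obtain ⟨hz1, hz2⟩ := hz
      have hzpos : 0 < ‖z‖ := lt_trans ha0 hz1
      have hzb : ‖z‖ ≤ 1/16 := hz2.trans hb16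
      have hn1 := norm_sub_norm_le z w
      have hn2 := norm_sub_le z w
      have hzw_pos : 0 < ‖z - w‖ := by
        have : ‖w‖ < ‖z‖ := lt_of_le_of_lt hwle hz1
        linarith
      have hzwp : (0:ℝ) < ‖z - w‖ ^ p := Real.rpow_pos_of_pos hzw_pos p
      have hzp : (0:ℝ) < ‖z‖ ^ p := Real.rpow_pos_of_pos hzpos p
      have hzw_ub : ‖z - w‖ ≤ 2 * ‖z‖ := by linarith
      have hzw_small : ‖z - w‖ ≤ 3/32 := by linarith
      rw [hfval _ hzpos]
      refine le_min ?_ ?_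
      · rw [hqval z (by linarith) (lt_of_le_of_lt (hcoord z _) (by linarith))]
        gcongr
        linarith
      · rw [hqΨ, hqval _ (by linarith) (lt_of_le_of_lt (hcoord _ _) (by linarith))]
        gcongr
    · rw [hf, Set.indicator_of_notMem hz]
      exact le_min (hq0 z) ((hqΨ z) ▸ hq0 _)
  have hqm : Measurable q := by
    have hqfun : q = fun z : EuclideanSpace ℝ (Fin d) =>
        if -(1/8:ℝ) < z ⟨0, hd⟩ ∧ z ⟨0, hd⟩ < 1/8 ∧ ‖z‖ ≤ 1 then dα / ‖z‖ ^ p else 0 :=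
      funext hq
    rw [hqfun]
    have hev : Measurable fun z : EuclideanSpace ℝ (Fin d) => z ⟨0, hd⟩ :=
      (EuclideanSpace.proj (𝕜 := ℝ) (⟨0, hd⟩ : Fin d)).continuous.measurable
    have hnorm : Measurable fun z : EuclideanSpace ℝ (Fin d) => ‖z‖ := measurable_norm
    have hbody : Measurable fun z : EuclideanSpace ℝ (Fin d) => dα / ‖z‖ ^ p := by
      measurability
    refine Measurable.ite ?_ hbody measurable_const
    simp only [Set.setOf_and]
    exact ((measurableSet_lt measurable_const hev).inter
      ((measurableSet_lt hev measurable_const).inter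
        (measurableSet_le hnorm measurable_const)))
  have hqΨm : Measurable qΨ := by
    have : qΨ = fun z => q (z - w) := funext hqΨ
    rw [this]
    exact hqm.comp (measurable_id.sub measurable_const)
  have hMp : (0:ℝ) < (‖w‖/2) ^ p := Real.rpow_pos_of_pos (by positivity) p
  set M : ℝ := dα / (‖w‖/2) ^ p with hMdef
  have hM0 : (0:ℝ) ≤ M := by positivity
  set g : EuclideanSpace ℝ (Fin d) → ℝ :=
    Set.indicator (Metric.closedBall 0 1) (fun _ => M) with hgdef
  have hgint : Integrable g := by
    rw [hgdef, integrable_indicator_iff measurableSet_closedBall]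
    exact integrableOn_const measure_closedBall_lt_top.ne enorm_ne_top
  have hminm : AEStronglyMeasurable (fun z => min (q z) (qΨ z)) volume :=
    (hqm.min hqΨm).aestronglyMeasurable
  have hmin0 : ∀ z, 0 ≤ min (q z) (qΨ z) := fun z => le_min (hq0 z) ((hqΨ z) ▸ hq0 _)
  have hbound : ∀ z, ‖min (q z) (qΨ z)‖ ≤ g z := by
    intro z
    rw [Real.norm_of_nonneg (hmin0 z)]
    by_cases hz1 : ‖z‖ ≤ 1
    · have hzmem : z ∈ Metric.closedBall (0 : EuclideanSpace ℝ (Fin d)) 1 := by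
        simpa [Metric.mem_closedBall, dist_zero_right] using hz1
      rw [hgdef, Set.indicator_of_mem hzmem]
      rw [hq z, hqΨ z, hq (z - w)]
      split_ifs with h1 h2 h2
      · have hww : ‖w‖ ≤ ‖z‖ + ‖z - w‖ := by
          have : w = z - (z - w) := by abel
          calc ‖w‖ = ‖z - (z - w)‖ := by rw [← this]
          _ ≤ ‖z‖ + ‖z - w‖ := norm_sub_le _ _
        rcases le_total (‖w‖/2) ‖z‖ with h | h
        · refine (min_le_left _ _).trans ?_
          rw [hMdef]
          gcongr
        · have h' : ‖w‖/2 ≤ ‖z - w‖ := by linarith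
          refine (min_le_right _ _).trans ?_
          rw [hMdef]
          gcongr
      · exact le_trans (min_le_right _ _) hM0
      · exact le_trans (min_le_left _ _) hM0
      · exact le_trans (min_le_left _ _) hM0
    · have hqz : q z = 0 := by
        rw [hq, if_neg]
        rintro ⟨-, -, h⟩
        exact hz1 h
      have hznm : z ∉ Metric.closedBall (0 : EuclideanSpace ℝ (Fin d)) 1 := by
        simpa [Metric.mem_closedBall, dist_zero_right] using hz1
      rw [hgdef, Set.indicator_of_notMem hznm]
      exact le_trans (min_le_left _ _) hqz.le
  have hint : Integrable (fun z => min (q z) (qΨ z)) :=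
    hgint.mono' hminm (Filter.Eventually.of_forall hbound)
  have hf0 : ∀ s : ℝ, 0 ≤ f s := by
    intro s
    refine Set.indicator_nonneg (fun t ht => ?_) s
    have ht0 : 0 < t := lt_trans ha0 ht.1
    exact mul_nonneg (by rw [hc]; positivity) (Real.rpow_nonneg ht0.le _)
  have hle : ∫ z, f ‖z‖ ≤ ∫ z, min (q z) (qΨ z) :=
    integral_mono_of_nonneg (Filter.Eventually.of_forall fun z => hf0 _) hint
      (Filter.Eventually.of_forall hpoint)
  -- radial computation
  have hdim : Module.finrank ℝ (EuclideanSpace ℝ (Fin d)) = d := finrank_euclideanSpace_fin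
  have hradial : ∫ z : EuclideanSpace ℝ (Fin d), f ‖z‖ =
      d • (volume (Metric.ball (0 : EuclideanSpace ℝ (Fin d)) 1)).toReal •
        ∫ t in Set.Ioi (0:ℝ), t ^ (d - 1) • f t := by
    have h0 := integral_fun_norm_addHaar (volume : Measure (EuclideanSpace ℝ (Fin d))) f
    rw [hdim] at h0
    exact h0
  have hinner : (∫ t in Set.Ioi (0:ℝ), t ^ (d - 1) • f t)
      = c * ((a ^ (-α) - b ^ (-α)) / α) := by
    have h1 : (fun t : ℝ => t ^ (d - 1) • f t)
        = Set.indicator (Set.Ioc a b) (fun t => c * t ^ (-(1:ℝ) - α)) := by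
      ext t
      rw [hf]
      by_cases ht : t ∈ Set.Ioc a b
      · rw [Set.indicator_of_mem ht, Set.indicator_of_mem ht, smul_eq_mul]
        have ht0 : 0 < t := lt_trans ha0 ht.1
        have hnp : (t : ℝ) ^ (d - 1) = t ^ ((d:ℝ) - 1) := by
          rw [← Real.rpow_natCast t (d - 1)]
          congr 1
          push_cast [Nat.cast_sub hd]
          ring
        rw [hnp, mul_left_comm, ← Real.rpow_add ht0]
        congr 1
        rw [hp]
        ring
      · rw [Set.indicator_of_notMem ht, Set.indicator_of_notMem ht, smul_zero]
    rw [h1, setIntegral_indicator measurableSet_Ioc,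
      show Set.Ioi (0:ℝ) ∩ Set.Ioc a b = Set.Ioc a b from
        Set.inter_eq_self_of_subset_right fun t ht => lt_trans ha0 ht.1,
      ← intervalIntegral.integral_of_le hab, intervalIntegral.integral_const_mul,
      integral_rpow (Or.inr ⟨by intro h; apply hα0.ne'; linarith [h],
        Set.notMem_uIcc_of_lt ha0 hb0⟩)]
    have : (-(1:ℝ) - α + 1) = -α := by ring
    rw [this]
    congr 1
    rw [div_eq_div_iff (by simpa using hα0.ne') hα0.ne']
    ring
  have hΓd : (0:ℝ) < Real.Gamma ((d:ℝ)/2) := Real.Gamma_pos_of_pos (by positivity)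
  have hΓd1 : (0:ℝ) < Real.Gamma ((d:ℝ)/2 + 1) := Real.Gamma_pos_of_pos (by positivity)
  have hV : (volume (Metric.ball (0 : EuclideanSpace ℝ (Fin d)) 1)).toReal
      = Real.sqrt Real.pi ^ d / Real.Gamma ((d:ℝ)/2 + 1) := by
    rw [EuclideanSpace.volume_ball]
    simp only [Fintype.card_fin, ENNReal.ofReal_one, one_pow, one_mul]
    rw [ENNReal.toReal_ofReal (by positivity)]
  have hsq : Real.sqrt Real.pi ^ d = Real.pi ^ ((d:ℝ)/2) := by
    rw [Real.sqrt_eq_rpow, ← Real.rpow_natCast (Real.pi ^ ((1:ℝ)/2)) d,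
      ← Real.rpow_mul Real.pi_pos.le]
    congr 1
    ring
  have hσV : (d:ℝ) * (Real.sqrt Real.pi ^ d / Real.Gamma ((d:ℝ)/2 + 1)) = σ := by
    rw [hσ, hsq, Real.Gamma_add_one (by positivity)]
    have hd0 : ((d:ℝ)) ≠ 0 := by positivity
    field_simp
  have hσ0 : (0:ℝ) < σ := by
    rw [hσ]
    have : (0:ℝ) < Real.pi ^ ((d:ℝ)/2) := Real.rpow_pos_of_pos Real.pi_pos _
    positivity
  have hEQ : (∫ z : EuclideanSpace ℝ (Fin d), f ‖z‖)
      = σ * (c * ((a ^ (-α) - b ^ (-α)) / α)) := by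
    rw [hradial, hinner, hV, nsmul_eq_mul, smul_eq_mul, ← mul_assoc, hσV]
  have ha' : a ^ (-α) = Λ ^ (-α) * r ^ (-α) := by
    rw [ha, Real.mul_rpow hΛ0.le hr0.le]
  have hb' : b ^ (-α) = 2 ^ (-α) * Λ ^ (-(3*α)) * r ^ (-α) := by
    rw [hb, Real.mul_rpow (by positivity) hr0.le,
      Real.mul_rpow (by norm_num) (by positivity)]
    congr 2
    rw [← Real.rpow_natCast Λ 3, ← Real.rpow_mul hΛ0.le]
    congr 1
    push_cast
    ring
  have h2p1 : (2:ℝ) ^ (p + 1) = 2 ^ p * 2 := by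
    rw [Real.rpow_add two_pos, Real.rpow_one]
  have hK : (0:ℝ) ≤ Λ ^ (-α) - 2 ^ (-α) * Λ ^ (-(3 * α)) := by
    have h1 : Λ ^ (-(3*α)) ≤ Λ ^ (-α) := Real.rpow_le_rpow_of_exponent_le hΛ (by linarith)
    have h2 : (2:ℝ) ^ (-α) ≤ 1 := Real.rpow_le_one_of_one_le_of_nonpos (by norm_num) (by linarith)
    have h3 : (0:ℝ) ≤ Λ ^ (-(3*α)) := (Real.rpow_pos_of_pos hΛ0 _).le
    have h4 : 2 ^ (-α) * Λ ^ (-(3*α)) ≤ Λ ^ (-α) :=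
      le_trans (mul_le_of_le_one_left h3 h2) h1
    linarith
  refine le_trans ?_ hle
  rw [hEQ]
  rw [ha']
  rw [hb']
  rw [hc]
  rw [h2p1]
  have hX : (0:ℝ) ≤ σ * dα * (Λ ^ (-α) - 2 ^ (-α) * Λ ^ (-(3 * α))) * r ^ (-α) / (α * 2 ^ p) :=
    div_nonneg (mul_nonneg (mul_nonneg (mul_nonneg hσ0.le hdα0.le) hK)
      (Real.rpow_nonneg hr0.le _)) (by positivity)
  have hL : dα * σ / (α * (2 ^ p * 2)) * (Λ ^ (-α) - 2 ^ (-α) * Λ ^ (-(3 * α))) * r ^ (-α)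
      = σ * dα * (Λ ^ (-α) - 2 ^ (-α) * Λ ^ (-(3 * α))) * r ^ (-α) / (α * 2 ^ p) / 2 := by
    ring
  have hR : σ * (dα / 2 ^ p * ((Λ ^ (-α) * r ^ (-α) - 2 ^ (-α) * Λ ^ (-(3*α)) * r ^ (-α)) / α))
      = σ * dα * (Λ ^ (-α) - 2 ^ (-α) * Λ ^ (-(3 * α))) * r ^ (-α) / (α * 2 ^ p) := by
    ring
  rw [hL, hR]
  exact div_le_self hX one_le_two
end
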